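/- Monotone improvement under BN policy gradient ascent: If all agents perform one round of the update θ^{t+1,i} = θ^{t,i} + η ∇_{θ^i} V_{θ^t}(μ) with learning rate η ≤ (1−γ)³/(8N(r_max − r_min)), then V^{t+1}(s) ≥ V^t(s) for every state s and Q^{t+1}(s,a) ≥ Q^t(s,a) for every state-action pair (s,a). -/

import Mathlib

open Filter Topology
open scoped BigOperators Classical

namespace BNPG

variable {S : Type} [Fintype S] [DecidableEq S] [Nonempty S]
variable {N : ℕ} {A : Fin N → Type} [∀ i, Fintype (A i)] [∀ i, DecidableEq (A i)]
  [∀ i, Nonempty (A i)]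

/-- Joint actions of all agents. -/
abbrev JointAct (A : Fin N → Type) : Type := (i : Fin N) → A i

/-- Parent actions of agent `i`, given the parent sets `P`. -/
abbrev ParAct (A : Fin N → Type) (P : Fin N → Finset (Fin N)) (i : Fin N) : Type :=
  (j : {x : Fin N // x ∈ P i}) → A j.val

/-- Restriction of a joint action to agent `i`'s parents. -/
def restr (A : Fin N → Type) (P : Fin N → Finset (Fin N)) (i : Fin N) (a : JointAct A) :
    ParAct A P i := fun j => a j.val

/-- The parent relation forms a DAG: it admits a topological order. -/
def IsDAG (P : Fin N → Finset (Fin N)) : Prop :=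
  ∃ ord : Fin N → ℕ, ∀ i : Fin N, ∀ j ∈ P i, ord j < ord i

/-- Joint policies: a map from states to (signed) weights on joint actions. -/
abbrev Pol (S : Type) (A : Fin N → Type) : Type := S → JointAct A → ℝ

/-- `π` is a probability distribution over joint actions in every state. -/
def IsPol (π : Pol S A) : Prop := (∀ s a, 0 ≤ π s a) ∧ ∀ s, ∑ a, π s a = 1

/-- The transition function is a probability kernel. -/
def IsKernel (Ptr : S → JointAct A → S → ℝ) : Prop :=
  (∀ s a s', 0 ≤ Ptr s a s') ∧ ∀ s a, ∑ s', Ptr s a s' = 1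

/-- `μ` is a probability distribution over states. -/
def IsDist (μ : S → ℝ) : Prop := (∀ s, 0 ≤ μ s) ∧ ∑ s, μ s = 1

/-- Distribution of the state at time `t`, starting from initial distribution `ν`
and following joint policy `π` in the Markov game with transitions `Ptr`. -/
noncomputable def visit (Ptr : S → JointAct A → S → ℝ) (π : Pol S A) (ν : S → ℝ) :
    ℕ → S → ℝ
  | 0 => ν
  | t + 1 => fun s' => ∑ s, ∑ a, visit Ptr π ν t s * π s a * Ptr s a s'

/-- Discounted value `V_π(ν)` of policy `π` started from initial state distribution `ν`. -/
noncomputable def Vval (γ : ℝ) (Ptr : S → JointAct A → S → ℝ) (r : S → JointAct A → ℝ)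
    (π : Pol S A) (ν : S → ℝ) : ℝ :=
  ∑' t : ℕ, γ ^ t * ∑ s, ∑ a, visit Ptr π ν t s * π s a * r s a

/-- State value function `V_π(s)`. -/
noncomputable def VS (γ : ℝ) (Ptr : S → JointAct A → S → ℝ) (r : S → JointAct A → ℝ)
    (π : Pol S A) (s : S) : ℝ :=
  Vval γ Ptr r π (fun s' => if s' = s then 1 else 0)

/-- Action value function `Q_π(s,a)`. -/
noncomputable def Qa (γ : ℝ) (Ptr : S → JointAct A → S → ℝ) (r : S → JointAct A → ℝ)
    (π : Pol S A) (s : S) (a : JointAct A) : ℝ :=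
  r s a + γ * ∑ s', Ptr s a s' * VS γ Ptr r π s'

/-- (Unnormalized) discounted state visitation measure `d_ν^π(s)`. -/
noncomputable def dvisit (γ : ℝ) (Ptr : S → JointAct A → S → ℝ) (π : Pol S A)
    (ν : S → ℝ) (s : S) : ℝ :=
  ∑' t : ℕ, γ ^ t * visit Ptr π ν t s

/-- Tabular softmax parameters for a Bayesian network policy. -/
abbrev Param (S : Type) (A : Fin N → Type) (P : Fin N → Finset (Fin N)) : Type :=
  (i : Fin N) → S → ParAct A P i → A i → ℝ

/-- Local softmax policy of agent `i`: `π^i_{θ^i}(a^i | s, a^{P^i}) ∝ exp θ^i_{s,a^{P^i},a^i}`. -/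
noncomputable def locPol (P : Fin N → Finset (Fin N)) (θ : Param S A P) (i : Fin N) (s : S)
    (p : ParAct A P i) (ai : A i) : ℝ :=
  Real.exp (θ i s p ai) / ∑ b, Real.exp (θ i s p b)

/-- BN joint policy induced by arbitrary local policies: `π(a|s) = ∏ i π^i(a^i|s,a^{P^i})`. -/
noncomputable def bnPolGen (P : Fin N → Finset (Fin N))
    (π : (i : Fin N) → S → ParAct A P i → A i → ℝ) : Pol S A :=
  fun s a => ∏ i, π i s (restr A P i a) (a i)

/-- Tabular softmax BN joint policy. -/
noncomputable def bnPol (P : Fin N → Finset (Fin N)) (θ : Param S A P) : Pol S A :=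
  bnPolGen P (fun i => locPol P θ i)

/-- Coordinate basis vector of the parameter space at coordinate `(i, s, p, ai)`. -/
noncomputable def basis (P : Fin N → Finset (Fin N)) (i : Fin N) (s : S) (p : ParAct A P i)
    (ai : A i) : Param S A P :=
  Pi.single i (fun s' p' a' => if s' = s ∧ p' = p ∧ a' = ai then 1 else 0)

/-- Partial derivative of `f` with respect to the parameter coordinate `(i, s, p, ai)`. -/
noncomputable def pderiv (P : Fin N → Finset (Fin N)) (f : Param S A P → ℝ)
    (θ : Param S A P) (i : Fin N) (s : S) (p : ParAct A P i) (ai : A i) : ℝ :=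
  deriv (fun τ : ℝ => f (θ + τ • basis P i s p ai)) 0

/-- The policy gradient `∇_θ V_{π_θ}(μ)`, coordinatewise. -/
noncomputable def gradV (γ : ℝ) (Ptr : S → JointAct A → S → ℝ) (r : S → JointAct A → ℝ)
    (μ : S → ℝ) (P : Fin N → Finset (Fin N)) (θ : Param S A P) : Param S A P :=
  fun i s p ai => pderiv P (fun θ' => Vval γ Ptr r (bnPol P θ') μ) θ i s p ai

/-- Marginal probability `π^{P^i}(a^{P^i} | s)` of parent action `p` under joint policy `π`. -/
noncomputable def parentMarg (P : Fin N → Finset (Fin N)) (π : Pol S A) (i : Fin N) (s : S)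
    (p : ParAct A P i) : ℝ :=
  ∑ a, if restr A P i a = p then π s a else 0

/-- Conditional action value `Q_π(s, a^{P^i}) = E_{a^{-P^i} ∼ π(·|s,a^{P^i})}[Q_π(s,a)]`. -/
noncomputable def Qpar (γ : ℝ) (Ptr : S → JointAct A → S → ℝ) (r : S → JointAct A → ℝ)
    (P : Fin N → Finset (Fin N)) (π : Pol S A) (i : Fin N) (s : S) (p : ParAct A P i) : ℝ :=
  (∑ a, if restr A P i a = p then π s a * Qa γ Ptr r π s a else 0) / parentMarg P π i s p

/-- Conditional action value `Q_π(s, a^{P^i_+}) = E_{a^{-P^i_+} ∼ π(·|s,a^{P^i},a^i)}[Q_π(s,a)]`. -/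
noncomputable def QparPlus (γ : ℝ) (Ptr : S → JointAct A → S → ℝ) (r : S → JointAct A → ℝ)
    (P : Fin N → Finset (Fin N)) (π : Pol S A) (i : Fin N) (s : S) (p : ParAct A P i)
    (ai : A i) : ℝ :=
  (∑ a, if restr A P i a = p ∧ a i = ai then π s a * Qa γ Ptr r π s a else 0) /
    (∑ a, if restr A P i a = p ∧ a i = ai then π s a else 0)

/-- Advantage `A^i_π(s, a^{P^i}, a^i) = Q_π(s,a^{P^i_+}) − Q_π(s,a^{P^i})`. -/
noncomputable def Adv (γ : ℝ) (Ptr : S → JointAct A → S → ℝ) (r : S → JointAct A → ℝ)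
    (P : Fin N → Finset (Fin N)) (π : Pol S A) (i : Fin N) (s : S) (p : ParAct A P i)
    (ai : A i) : ℝ :=
  QparPlus γ Ptr r P π i s p ai - Qpar γ Ptr r P π i s p

/-- Augmented state visitation `d_μ^π(s, a^{P^i}) = d_μ^π(s) ⬝ π^{P^i}(a^{P^i}|s)`. -/
noncomputable def dAug (γ : ℝ) (Ptr : S → JointAct A → S → ℝ) (P : Fin N → Finset (Fin N))
    (π : Pol S A) (μ : S → ℝ) (i : Fin N) (s : S) (p : ParAct A P i) : ℝ :=
  dvisit γ Ptr π μ s * parentMarg P π i s p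

/-- Centered advantage `Ā^{π_θ,i}(s,a) = Q(s,a) − E_{ā^i ∼ π^i(·|s,a^{P^i})} Q(s,ā^i,a^{-i})`. -/
noncomputable def Abar (γ : ℝ) (Ptr : S → JointAct A → S → ℝ) (r : S → JointAct A → ℝ)
    (P : Fin N → Finset (Fin N)) (θ : Param S A P) (i : Fin N) (s : S) (a : JointAct A) : ℝ :=
  Qa γ Ptr r (bnPol P θ) s a -
    ∑ b : A i, locPol P θ i s (restr A P i a) b *
      Qa γ Ptr r (bnPol P θ) s (Function.update a i b)

/-- `Δ`: the minimal nonzero magnitude of the limiting advantages. -/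
noncomputable def Delta (P : Fin N → Finset (Fin N))
    (QplusInf : (i : Fin N) → S → ParAct A P i → A i → ℝ)
    (QmInf : (i : Fin N) → S → ParAct A P i → ℝ) : ℝ :=
  sInf {x : ℝ | ∃ (i : Fin N) (s : S) (p : ParAct A P i) (ai : A i),
    QplusInf i s p ai - QmInf i s p ≠ 0 ∧ x = |QplusInf i s p ai - QmInf i s p|}


set_option linter.unusedSectionVars false
set_option maxRecDepth 8000
set_option maxHeartbeats 1000000

section Aux

variable {P : Fin N → Finset (Fin N)}

lemma sum_exp_pos (θ : Param S A P) (i : Fin N) (s : S) (p : ParAct A P i) :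
    0 < ∑ b, Real.exp (θ i s p b) :=
  Finset.sum_pos (fun _ _ => Real.exp_pos _) Finset.univ_nonempty

lemma locPol_nonneg (θ : Param S A P) (i : Fin N) (s : S) (p : ParAct A P i) (b : A i) :
    0 ≤ locPol P θ i s p b :=
  div_nonneg (Real.exp_pos _).le (Finset.sum_nonneg fun _ _ => (Real.exp_pos _).le)

lemma locPol_sum_one (θ : Param S A P) (i : Fin N) (s : S) (p : ParAct A P i) :
    ∑ b, locPol P θ i s p b = 1 := by
  unfold locPol
  rw [← Finset.sum_div, div_self (sum_exp_pos θ i s p).ne']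

lemma restr_update {i j : Fin N} (hij : i ∉ P j) (a : JointAct A) (b : A i) :
    restr A P j (Function.update a i b) = restr A P j a := by
  funext k
  have hk : (k : Fin N) ≠ i := fun h => hij (h ▸ k.prop)
  show Function.update a i b (k : Fin N) = a (k : Fin N)
  exact Function.update_of_ne hk _ _

/-- Summing out one coordinate that `G` and the conditioning of `f` do not depend on. -/
lemma sum_extract (i : Fin N) (G : JointAct A → ℝ)
    (hG : ∀ (a : JointAct A) (b : A i), G (Function.update a i b) = G a)
    (f : JointAct A → A i → ℝ)
    (hf : ∀ (a : JointAct A) (b : A i) (c : A i),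
      f (Function.update a i b) c = f a c)
    (hsum : ∀ a, ∑ b, f a b = 1) :
    ∑ a, G a * f a (a i) = (∑ a, G a) / (Fintype.card (A i) : ℝ) := by
  classical
  set e := (Equiv.piSplitAt i A).symm with he
  have key : ∀ (b : A i) (rest : (j : {j : Fin N // j ≠ i}) → A j.val) (b' : A i),
      Function.update (e (b', rest)) i b = e (b, rest) := by
    intro b rest b'
    funext j
    by_cases hj : j = i
    · subst hj
      simp [he, Equiv.piSplitAt]
    · simp [Function.update_of_ne hj, he, Equiv.piSplitAt, dif_neg hj]
  obtain ⟨b0⟩ : Nonempty (A i) := inferInstance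
  have ei : ∀ (b : A i) rest, e (b, rest) i = b := by
    intro b rest; simp [he, Equiv.piSplitAt]
  have hGe : ∀ (b : A i) rest, G (e (b, rest)) = G (e (b0, rest)) := by
    intro b rest; rw [← key b rest b0, hG]
  have hfe : ∀ (b : A i) rest (c : A i), f (e (b, rest)) c = f (e (b0, rest)) c := by
    intro b rest c; rw [← key b rest b0, hf]
  have h1 : ∑ a, G a * f a (a i)
      = ∑ x : A i × ((j : {j : Fin N // j ≠ i}) → A j.val), G (e x) * f (e x) ((e x) i) :=
    (Equiv.sum_comp e (fun a => G a * f a (a i))).symm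
  have h2 : ∑ a, G a = ∑ x : A i × ((j : {j : Fin N // j ≠ i}) → A j.val), G (e x) :=
    (Equiv.sum_comp e G).symm
  rw [h1, h2, Fintype.sum_prod_type, Fintype.sum_prod_type]
  rw [Finset.sum_comm]
  conv_rhs => rw [Finset.sum_comm]
  have hcard : (0:ℝ) < (Fintype.card (A i) : ℝ) := by
    exact_mod_cast Fintype.card_pos
  rw [eq_div_iff hcard.ne', Finset.sum_mul]
  refine Finset.sum_congr rfl fun rest _ => ?_
  have lhs1 : ∑ b : A i, G (e (b, rest)) * f (e (b, rest)) ((e (b, rest)) i)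
      = G (e (b0, rest)) := by
    calc ∑ b : A i, G (e (b, rest)) * f (e (b, rest)) ((e (b, rest)) i)
        = ∑ b : A i, G (e (b0, rest)) * f (e (b0, rest)) b := by
          refine Finset.sum_congr rfl fun b _ => ?_
          rw [hGe, ei, hfe]
      _ = G (e (b0, rest)) * ∑ b : A i, f (e (b0, rest)) b := by
          rw [Finset.mul_sum]
      _ = G (e (b0, rest)) := by rw [hsum, mul_one]
  have rhs1 : ∑ b : A i, G (e (b, rest)) = (Fintype.card (A i) : ℝ) * G (e (b0, rest)) := by
    rw [Finset.sum_congr rfl fun b _ => hGe b rest, Finset.sum_const, Finset.card_univ,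
      nsmul_eq_mul]
  rw [lhs1, rhs1]
  ring

/-- Marginalization over a DAG: summing a partial product of conditionals. -/
lemma sum_prod_cond (hDAG : IsDAG P)
    (g : (i : Fin N) → ParAct A P i → A i → ℝ)
    (hg : ∀ i p, ∑ b, g i p b = 1) (T : Finset (Fin N)) :
    ∑ a : JointAct A, ∏ i ∈ T, g i (restr A P i a) (a i)
      = ∏ i ∈ Tᶜ, (Fintype.card (A i) : ℝ) := by
  classical
  obtain ⟨ord, hord⟩ := hDAG
  induction T using Finset.strongInduction with
  | _ T ih =>
    rcases T.eq_empty_or_nonempty with rfl | hT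
    · rw [Finset.compl_empty]
      simp only [Finset.prod_empty]
      rw [Finset.sum_const, Finset.card_univ, nsmul_eq_mul, mul_one, Fintype.card_pi,
        Nat.cast_prod]
    · obtain ⟨i, hiT, hmax⟩ := T.exists_max_image ord hT
      have hiPi : i ∉ P i := fun h => lt_irrefl _ (hord i i h)
      have hiPj : ∀ j ∈ T.erase i, i ∉ P j := by
        intro j hj h
        exact absurd (lt_of_lt_of_le (hord j i h) (hmax j (Finset.mem_of_mem_erase hj)))
          (lt_irrefl _)
      have step : ∑ a : JointAct A, ∏ k ∈ T, g k (restr A P k a) (a k)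
          = (∑ a : JointAct A, ∏ k ∈ T.erase i, g k (restr A P k a) (a k))
              / (Fintype.card (A i) : ℝ) := by
        have := sum_extract i
          (fun a => ∏ k ∈ T.erase i, g k (restr A P k a) (a k))
          (by
            intro a b
            show (∏ k ∈ T.erase i, g k (restr A P k (Function.update a i b))
                ((Function.update a i b) k)) = _
            refine Finset.prod_congr rfl fun j hj => ?_
            rw [restr_update (hiPj j hj), Function.update_of_ne (Finset.ne_of_mem_erase hj)])
          (fun a c => g i (restr A P i a) c)
          (by
            intro a b c
            show g i (restr A P i (Function.update a i b)) c = g i (restr A P i a) c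
            rw [restr_update hiPi])
          (fun a => hg i _)
        rw [← this]
        refine Finset.sum_congr rfl fun a _ => ?_
        rw [← Finset.prod_erase_mul T _ hiT]
      rw [step, ih (T.erase i) (Finset.erase_ssubset hiT),
        Finset.compl_erase, Finset.prod_insert (by simp [hiT])]
      rw [mul_comm, mul_div_assoc, div_self, mul_one]
      exact_mod_cast (Fintype.card_pos (α := A i)).ne'

lemma bnPolGen_isPol (hDAG : IsDAG P)
    (g : (i : Fin N) → S → ParAct A P i → A i → ℝ)
    (hg0 : ∀ i s p b, 0 ≤ g i s p b) (hg1 : ∀ i s p, ∑ b, g i s p b = 1) :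
    IsPol (bnPolGen P g) := by
  constructor
  · intro s a
    exact Finset.prod_nonneg fun i _ => hg0 i s _ _
  · intro s
    have := sum_prod_cond hDAG (fun i p b => g i s p b) (fun i p => hg1 i s p) Finset.univ
    simpa [bnPolGen] using this

lemma bnPol_isPol (hDAG : IsDAG P) (θ : Param S A P) : IsPol (bnPol P θ) :=
  bnPolGen_isPol hDAG _ (fun i s p b => locPol_nonneg θ i s p b)
    (fun i s p => locPol_sum_one θ i s p)

end Aux


section MDP

variable {P : Fin N → Finset (Fin N)}
variable {γ : ℝ} {Ptr : S → JointAct A → S → ℝ} {r : S → JointAct A → ℝ}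
variable {π : Pol S A} {ν : S → ℝ}

/-- One step of the state-distribution dynamics. -/
noncomputable def stepd (Ptr : S → JointAct A → S → ℝ) (π : Pol S A) (ν : S → ℝ) : S → ℝ :=
  fun s' => ∑ s, ∑ a, ν s * π s a * Ptr s a s'

/-- Expected instantaneous reward. -/
noncomputable def Rpol (r : S → JointAct A → ℝ) (π : Pol S A) (s : S) : ℝ :=
  ∑ a, π s a * r s a

/-- Dirac distribution. -/
def dirac (s : S) : S → ℝ := fun s' => if s' = s then 1 else 0

lemma dirac_isDist (s : S) : IsDist (dirac s) := by
  constructor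
  · intro s'; unfold dirac; split <;> norm_num
  · simp [dirac]

lemma VS_eq_Vval_dirac (s : S) : VS γ Ptr r π s = Vval γ Ptr r π (dirac s) := rfl

lemma visit_succ (t : ℕ) :
    visit Ptr π ν (t + 1) = stepd Ptr π (visit Ptr π ν t) := rfl

lemma visit_shift (t : ℕ) :
    visit Ptr π ν (t + 1) = visit Ptr π (stepd Ptr π ν) t := by
  induction t with
  | zero => rfl
  | succ t ih => rw [visit_succ, ih]; rfl

lemma stepd_nonneg (hP : IsKernel Ptr) (hπ : IsPol π) (hν : ∀ s, 0 ≤ ν s) (s' : S) :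
    0 ≤ stepd Ptr π ν s' := by
  refine Finset.sum_nonneg fun s _ => Finset.sum_nonneg fun a _ => ?_
  exact mul_nonneg (mul_nonneg (hν s) (hπ.1 s a)) (hP.1 s a s')

lemma stepd_mass (hP : IsKernel Ptr) (hπ : IsPol π) :
    ∑ s', stepd Ptr π ν s' = ∑ s, ν s := by
  unfold stepd
  rw [Finset.sum_comm]
  refine Finset.sum_congr rfl fun s _ => ?_
  rw [Finset.sum_comm]
  have : ∀ a ∈ (Finset.univ : Finset (JointAct A)),
      ∑ s', ν s * π s a * Ptr s a s' = ν s * π s a := by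
    intro a _
    rw [← Finset.mul_sum, hP.2 s a, mul_one]
  rw [Finset.sum_congr rfl this, ← Finset.mul_sum, hπ.2 s, mul_one]

lemma visit_nonneg (hP : IsKernel Ptr) (hπ : IsPol π) (hν : ∀ s, 0 ≤ ν s) (t : ℕ) (s : S) :
    0 ≤ visit Ptr π ν t s := by
  induction t generalizing ν hν with
  | zero => exact hν s
  | succ t ih =>
    rw [visit_shift]
    exact ih (fun s => stepd_nonneg hP hπ hν s)

lemma visit_mass (hP : IsKernel Ptr) (hπ : IsPol π) (t : ℕ) :
    ∑ s, visit Ptr π ν t s = ∑ s, ν s := by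
  induction t generalizing ν with
  | zero => rfl
  | succ t ih => rw [visit_shift, ih, stepd_mass hP hπ]

lemma visit_le_one (hP : IsKernel Ptr) (hπ : IsPol π) (hν : IsDist ν) (t : ℕ) (s : S) :
    visit Ptr π ν t s ≤ 1 := by
  have h1 : ∑ s', visit Ptr π ν t s' = 1 := by rw [visit_mass hP hπ, hν.2]
  rw [← h1]
  exact Finset.single_le_sum (fun s' _ => visit_nonneg hP hπ hν.1 t s') (Finset.mem_univ s)

lemma weighted_abs_le (hP : IsKernel Ptr) (hπ : IsPol π) (hν : IsDist ν) (t : ℕ)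
    {f : S → ℝ} {C : ℝ} (hf : ∀ s, |f s| ≤ C) :
    |∑ s, visit Ptr π ν t s * f s| ≤ C := by
  have h1 : ∑ s', visit Ptr π ν t s' = 1 := by rw [visit_mass hP hπ, hν.2]
  calc |∑ s, visit Ptr π ν t s * f s| ≤ ∑ s, |visit Ptr π ν t s * f s| :=
        Finset.abs_sum_le_sum_abs _ _
    _ ≤ ∑ s, visit Ptr π ν t s * C := by
        refine Finset.sum_le_sum fun s _ => ?_
        rw [abs_mul, abs_of_nonneg (visit_nonneg hP hπ hν.1 t s)]
        exact mul_le_mul_of_nonneg_left (hf s) (visit_nonneg hP hπ hν.1 t s)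
    _ = C := by rw [← Finset.sum_mul, h1, one_mul]

lemma summable_geom_bound (hγ0 : 0 ≤ γ) (hγ1 : γ < 1) {f : ℕ → ℝ} {C : ℝ}
    (h : ∀ t, |f t| ≤ C * γ ^ t) : Summable f := by
  refine Summable.of_norm_bounded
    ((summable_geometric_of_lt_one hγ0 hγ1).mul_left C) ?_
  intro t
  simpa using h t

lemma summable_visit_weight (hγ0 : 0 ≤ γ) (hγ1 : γ < 1) (hP : IsKernel Ptr) (hπ : IsPol π)
    (hν : IsDist ν) {f : S → ℝ} {C : ℝ} (hf : ∀ s, |f s| ≤ C) :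
    Summable (fun t => γ ^ t * ∑ s, visit Ptr π ν t s * f s) := by
  refine summable_geom_bound hγ0 hγ1 (C := C) fun t => ?_
  rw [abs_mul, abs_pow, abs_of_nonneg hγ0, mul_comm (C : ℝ)]
  exact mul_le_mul_of_nonneg_left (weighted_abs_le hP hπ hν t hf) (pow_nonneg hγ0 t)

lemma Vval_eq :
    Vval γ Ptr r π ν = ∑' t : ℕ, γ ^ t * ∑ s, visit Ptr π ν t s * Rpol r π s := by
  unfold Vval Rpol
  refine tsum_congr fun t => ?_
  congr 1
  refine Finset.sum_congr rfl fun s _ => ?_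
  rw [Finset.mul_sum]
  exact Finset.sum_congr rfl fun a _ => by ring

lemma abs_Rpol_le {C : ℝ} (hπ : IsPol π) (hr : ∀ s a, |r s a| ≤ C) (hC : 0 ≤ C) (s : S) :
    |Rpol r π s| ≤ C := by
  unfold Rpol
  calc |∑ a, π s a * r s a| ≤ ∑ a, |π s a * r s a| := Finset.abs_sum_le_sum_abs _ _
    _ ≤ ∑ a, π s a * C := by
        refine Finset.sum_le_sum fun a _ => ?_
        rw [abs_mul, abs_of_nonneg (hπ.1 s a)]
        exact mul_le_mul_of_nonneg_left (hr s a) (hπ.1 s a)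
    _ = C := by rw [← Finset.sum_mul, hπ.2 s, one_mul]

lemma Rpol_bounds {lo hi : ℝ} (hπ : IsPol π) (hr : ∀ s a, lo ≤ r s a ∧ r s a ≤ hi) (s : S) :
    lo ≤ Rpol r π s ∧ Rpol r π s ≤ hi := by
  unfold Rpol
  constructor
  · calc lo = ∑ a, π s a * lo := by rw [← Finset.sum_mul, hπ.2 s, one_mul]
      _ ≤ ∑ a, π s a * r s a := Finset.sum_le_sum fun a _ =>
          mul_le_mul_of_nonneg_left (hr s a).1 (hπ.1 s a)
  · calc ∑ a, π s a * r s a ≤ ∑ a, π s a * hi := Finset.sum_le_sum fun a _ =>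
          mul_le_mul_of_nonneg_left (hr s a).2 (hπ.1 s a)
      _ = hi := by rw [← Finset.sum_mul, hπ.2 s, one_mul]

lemma Bellman_dist (hγ0 : 0 ≤ γ) (hγ1 : γ < 1) (hP : IsKernel Ptr) (hπ : IsPol π)
    (hν : IsDist ν) {C : ℝ} (hr : ∀ s a, |r s a| ≤ C) (hC : 0 ≤ C) :
    Vval γ Ptr r π ν = (∑ s, ν s * Rpol r π s) + γ * Vval γ Ptr r π (stepd Ptr π ν) := by
  have hRb : ∀ s, |Rpol r π s| ≤ C := abs_Rpol_le hπ hr hC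
  have hsd : IsDist (stepd Ptr π ν) :=
    ⟨fun s => stepd_nonneg hP hπ hν.1 s, by rw [stepd_mass hP hπ, hν.2]⟩
  have hsum : Summable (fun t => γ ^ t * ∑ s, visit Ptr π ν t s * Rpol r π s) :=
    summable_visit_weight hγ0 hγ1 hP hπ hν hRb
  rw [Vval_eq, Summable.tsum_eq_zero_add hsum]
  congr 1
  · simp only [pow_zero, one_mul]
    rfl
  · have : ∀ t : ℕ, γ ^ (t + 1) * ∑ s, visit Ptr π ν (t + 1) s * Rpol r π s
        = γ * (γ ^ t * ∑ s, visit Ptr π (stepd Ptr π ν) t s * Rpol r π s) := by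
      intro t
      rw [visit_shift, pow_succ]
      ring
    rw [tsum_congr this, tsum_mul_left, Vval_eq]

lemma visit_lin (t : ℕ) (s' : S) :
    visit Ptr π ν t s' = ∑ s0, ν s0 * visit Ptr π (dirac s0) t s' := by
  induction t generalizing s' with
  | zero =>
    show ν s' = _
    simp [dirac, visit]
  | succ t ih =>
    show stepd Ptr π (visit Ptr π ν t) s' = _
    have hterm : ∀ s0, ν s0 * visit Ptr π (dirac s0) (t+1) s'
        = ∑ s, ∑ a, ν s0 * (visit Ptr π (dirac s0) t s * π s a * Ptr s a s') := by
      intro s0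
      show ν s0 * stepd Ptr π (visit Ptr π (dirac s0) t) s' = _
      unfold stepd
      rw [Finset.mul_sum]
      refine Finset.sum_congr rfl fun s _ => ?_
      rw [Finset.mul_sum]
    unfold stepd
    calc ∑ s, ∑ a, visit Ptr π ν t s * π s a * Ptr s a s'
        = ∑ s, ∑ a, ∑ s0, ν s0 * (visit Ptr π (dirac s0) t s * π s a * Ptr s a s') := by
          refine Finset.sum_congr rfl fun s _ => Finset.sum_congr rfl fun a _ => ?_
          rw [ih s, Finset.sum_mul, Finset.sum_mul]
          exact Finset.sum_congr rfl fun s0 _ => by ring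
      _ = ∑ s, ∑ s0, ∑ a, ν s0 * (visit Ptr π (dirac s0) t s * π s a * Ptr s a s') :=
          Finset.sum_congr rfl fun s _ => Finset.sum_comm
      _ = ∑ s0, ∑ s, ∑ a, ν s0 * (visit Ptr π (dirac s0) t s * π s a * Ptr s a s') :=
          Finset.sum_comm
      _ = ∑ s0, ν s0 * visit Ptr π (dirac s0) (t+1) s' :=
          Finset.sum_congr rfl fun s0 _ => (hterm s0).symm

lemma Vval_lin (hγ0 : 0 ≤ γ) (hγ1 : γ < 1) (hP : IsKernel Ptr) (hπ : IsPol π)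
    {C : ℝ} (hr : ∀ s a, |r s a| ≤ C) (hC : 0 ≤ C) :
    Vval γ Ptr r π ν = ∑ s0, ν s0 * VS γ Ptr r π s0 := by
  have hRb : ∀ s, |Rpol r π s| ≤ C := abs_Rpol_le hπ hr hC
  rw [Vval_eq]
  have h1 : ∀ t : ℕ, γ ^ t * ∑ s, visit Ptr π ν t s * Rpol r π s
      = ∑ s0, ν s0 * (γ ^ t * ∑ s, visit Ptr π (dirac s0) t s * Rpol r π s) := by
    intro t
    have h0 : ∑ s, visit Ptr π ν t s * Rpol r π s
        = ∑ s0, ∑ s, ν s0 * (visit Ptr π (dirac s0) t s * Rpol r π s) := by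
      calc ∑ s, visit Ptr π ν t s * Rpol r π s
          = ∑ s, ∑ s0, ν s0 * (visit Ptr π (dirac s0) t s * Rpol r π s) := by
            refine Finset.sum_congr rfl fun s _ => ?_
            rw [visit_lin, Finset.sum_mul]
            exact Finset.sum_congr rfl fun s0 _ => by ring
        _ = ∑ s0, ∑ s, ν s0 * (visit Ptr π (dirac s0) t s * Rpol r π s) := Finset.sum_comm
    rw [h0]
    simp only [Finset.mul_sum]
    refine Finset.sum_congr rfl fun s0 _ => Finset.sum_congr rfl fun s _ => by ring
  rw [tsum_congr h1]
  rw [Summable.tsum_finsetSum (fun s0 _ => ((summable_visit_weight hγ0 hγ1 hP hπ (dirac_isDist s0)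
    hRb).mul_left (ν s0)))]
  refine Finset.sum_congr rfl fun s0 _ => ?_
  rw [tsum_mul_left, VS_eq_Vval_dirac, Vval_eq]

lemma Vval_bounds (hγ0 : 0 ≤ γ) (hγ1 : γ < 1) (hP : IsKernel Ptr) (hπ : IsPol π)
    (hν : IsDist ν) {lo hi : ℝ} (hr : ∀ s a, lo ≤ r s a ∧ r s a ≤ hi) :
    lo / (1 - γ) ≤ Vval γ Ptr r π ν ∧ Vval γ Ptr r π ν ≤ hi / (1 - γ) := by
  have hlohi : lo ≤ hi := le_trans (hr (Classical.arbitrary S)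
    (fun i => Classical.arbitrary (A i))).1 (hr _ _).2
  set C := max |lo| |hi| with hCdef
  have hC : 0 ≤ C := le_trans (abs_nonneg lo) (le_max_left _ _)
  have hrC : ∀ s a, |r s a| ≤ C := by
    intro s a
    rcases abs_le.mpr ⟨neg_abs_le lo, le_abs_self lo⟩ with _
    rw [abs_le]
    constructor
    · have := (hr s a).1
      have h2 : -C ≤ lo := by
        have := neg_abs_le lo
        exact le_trans (neg_le_neg (le_max_left |lo| |hi|)) this
      linarith
    · exact le_trans (hr s a).2 (le_trans (le_abs_self hi) (le_max_right _ _))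
  have hRb : ∀ s, |Rpol r π s| ≤ C := abs_Rpol_le hπ hrC hC
  have hsum : Summable (fun t => γ ^ t * ∑ s, visit Ptr π ν t s * Rpol r π s) :=
    summable_visit_weight hγ0 hγ1 hP hπ hν hRb
  have hmass : ∀ t, ∑ s, visit Ptr π ν t s = 1 := fun t => by
    rw [visit_mass hP hπ, hν.2]
  have hgeo : Summable (fun t : ℕ => γ ^ t) := summable_geometric_of_lt_one hγ0 hγ1
  have hterm_lo : ∀ t : ℕ, γ ^ t * lo ≤ γ ^ t * ∑ s, visit Ptr π ν t s * Rpol r π s := by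
    intro t
    refine mul_le_mul_of_nonneg_left ?_ (pow_nonneg hγ0 t)
    calc lo = ∑ s, visit Ptr π ν t s * lo := by rw [← Finset.sum_mul, hmass t, one_mul]
      _ ≤ ∑ s, visit Ptr π ν t s * Rpol r π s := Finset.sum_le_sum fun s _ =>
          mul_le_mul_of_nonneg_left (Rpol_bounds hπ hr s).1 (visit_nonneg hP hπ hν.1 t s)
  have hterm_hi : ∀ t : ℕ, γ ^ t * ∑ s, visit Ptr π ν t s * Rpol r π s ≤ γ ^ t * hi := by
    intro t
    refine mul_le_mul_of_nonneg_left ?_ (pow_nonneg hγ0 t)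
    calc ∑ s, visit Ptr π ν t s * Rpol r π s ≤ ∑ s, visit Ptr π ν t s * hi :=
          Finset.sum_le_sum fun s _ =>
            mul_le_mul_of_nonneg_left (Rpol_bounds hπ hr s).2 (visit_nonneg hP hπ hν.1 t s)
      _ = hi := by rw [← Finset.sum_mul, hmass t, one_mul]
  have hgs : (∑' t : ℕ, γ ^ t) = (1 - γ)⁻¹ := tsum_geometric_of_lt_one hγ0 hγ1
  constructor
  · have := Summable.tsum_le_tsum hterm_lo (hgeo.mul_right lo) hsum
    rw [Vval_eq]
    calc lo / (1 - γ) = ∑' t : ℕ, γ ^ t * lo := by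
          rw [tsum_mul_right, hgs, div_eq_mul_inv, mul_comm]
      _ ≤ _ := this
  · have := Summable.tsum_le_tsum hterm_hi hsum (hgeo.mul_right hi)
    calc Vval γ Ptr r π ν = ∑' t : ℕ, γ ^ t * ∑ s, visit Ptr π ν t s * Rpol r π s := Vval_eq
      _ ≤ ∑' t : ℕ, γ ^ t * hi := this
      _ = hi / (1 - γ) := by rw [tsum_mul_right, hgs, div_eq_mul_inv, mul_comm]

end MDP


section MDP2

variable {P : Fin N → Finset (Fin N)}
variable {γ : ℝ} {Ptr : S → JointAct A → S → ℝ} {r : S → JointAct A → ℝ}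
variable {π π' : Pol S A} {ν : S → ℝ}

lemma Bellman_VS (hγ0 : 0 ≤ γ) (hγ1 : γ < 1) (hP : IsKernel Ptr) (hπ : IsPol π)
    {C : ℝ} (hrC : ∀ s a, |r s a| ≤ C) (hC : 0 ≤ C) (s : S) :
    VS γ Ptr r π s = ∑ a, π s a * Qa γ Ptr r π s a := by
  have hds := dirac_isDist s
  rw [VS_eq_Vval_dirac, Bellman_dist hγ0 hγ1 hP hπ hds hrC hC,
    Vval_lin hγ0 hγ1 hP hπ hrC hC]
  have h1 : ∑ s0, dirac s s0 * Rpol r π s0 = Rpol r π s := by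
    simp [dirac]
  have h2 : ∀ s', stepd Ptr π (dirac s) s' = ∑ a, π s a * Ptr s a s' := by
    intro s'
    unfold stepd dirac
    rw [Finset.sum_comm]
    refine Finset.sum_congr rfl fun a _ => ?_
    simp
  rw [h1, Finset.sum_congr rfl fun s' (_ : s' ∈ Finset.univ) => by rw [h2 s']]
  unfold Qa Rpol
  rw [Finset.sum_congr rfl fun a (_ : a ∈ (Finset.univ : Finset (JointAct A))) => mul_add
    (π s a) (r s a) (γ * ∑ s', Ptr s a s' * VS γ Ptr r π s'), Finset.sum_add_distrib]
  congr 1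
  calc γ * ∑ s', (∑ a, π s a * Ptr s a s') * VS γ Ptr r π s'
      = γ * ∑ s', ∑ a, π s a * (Ptr s a s' * VS γ Ptr r π s') := by
        congr 1
        refine Finset.sum_congr rfl fun s' _ => ?_
        rw [Finset.sum_mul]
        exact Finset.sum_congr rfl fun a _ => by ring
    _ = γ * ∑ a, ∑ s', π s a * (Ptr s a s' * VS γ Ptr r π s') := by rw [Finset.sum_comm]
    _ = ∑ a, π s a * (γ * ∑ s', Ptr s a s' * VS γ Ptr r π s') := by
        rw [Finset.mul_sum]
        refine Finset.sum_congr rfl fun a _ => ?_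
        rw [Finset.mul_sum, Finset.mul_sum, Finset.mul_sum]
        exact Finset.sum_congr rfl fun s' _ => by ring

lemma VS_bounds (hγ0 : 0 ≤ γ) (hγ1 : γ < 1) (hP : IsKernel Ptr) (hπ : IsPol π)
    {lo hi : ℝ} (hr : ∀ s a, lo ≤ r s a ∧ r s a ≤ hi) (s : S) :
    lo / (1 - γ) ≤ VS γ Ptr r π s ∧ VS γ Ptr r π s ≤ hi / (1 - γ) := by
  rw [VS_eq_Vval_dirac]
  exact Vval_bounds hγ0 hγ1 hP hπ (dirac_isDist s) hr

lemma Qa_bounds (hγ0 : 0 ≤ γ) (hγ1 : γ < 1) (hP : IsKernel Ptr) (hπ : IsPol π)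
    {lo hi : ℝ} (hr : ∀ s a, lo ≤ r s a ∧ r s a ≤ hi) (s : S) (a : JointAct A) :
    lo / (1 - γ) ≤ Qa γ Ptr r π s a ∧ Qa γ Ptr r π s a ≤ hi / (1 - γ) := by
  have h1γ : (0:ℝ) < 1 - γ := by linarith
  have hVS := fun s' => VS_bounds hγ0 hγ1 hP hπ hr s'
  have hsum_lo : lo / (1 - γ) ≤ ∑ s', Ptr s a s' * VS γ Ptr r π s' := by
    calc lo / (1 - γ) = ∑ s', Ptr s a s' * (lo / (1 - γ)) := by
          rw [← Finset.sum_mul, hP.2 s a, one_mul]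
      _ ≤ _ := Finset.sum_le_sum fun s' _ =>
          mul_le_mul_of_nonneg_left (hVS s').1 (hP.1 s a s')
  have hsum_hi : ∑ s', Ptr s a s' * VS γ Ptr r π s' ≤ hi / (1 - γ) := by
    calc ∑ s', Ptr s a s' * VS γ Ptr r π s'
        ≤ ∑ s', Ptr s a s' * (hi / (1 - γ)) := Finset.sum_le_sum fun s' _ =>
          mul_le_mul_of_nonneg_left (hVS s').2 (hP.1 s a s')
      _ = hi / (1 - γ) := by rw [← Finset.sum_mul, hP.2 s a, one_mul]
  unfold Qa
  constructor
  · have hkey : lo + γ * (lo / (1 - γ)) = lo / (1 - γ) := by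
      field_simp
      ring
    have := mul_le_mul_of_nonneg_left hsum_lo hγ0
    have := (hr s a).1
    linarith
  · have hkey : hi + γ * (hi / (1 - γ)) = hi / (1 - γ) := by
      field_simp
      ring
    have := mul_le_mul_of_nonneg_left hsum_hi hγ0
    have := (hr s a).2
    linarith

lemma PDL (hγ0 : 0 ≤ γ) (hγ1 : γ < 1) (hP : IsKernel Ptr)
    (hπ : IsPol π) (hπ' : IsPol π') (hν : IsDist ν)
    {C : ℝ} (hrC : ∀ s a, |r s a| ≤ C) (hC : 0 ≤ C) :
    Vval γ Ptr r π' ν - Vval γ Ptr r π ν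
      = ∑' t : ℕ, γ ^ t * ∑ s', visit Ptr π' ν t s' *
          ((∑ a, π' s' a * Qa γ Ptr r π s' a) - VS γ Ptr r π s') := by
  have h1γ : (0:ℝ) < 1 - γ := by linarith
  have hrlh : ∀ s a, -C ≤ r s a ∧ r s a ≤ C := fun s a => abs_le.mp (hrC s a)
  have hVSb : ∀ s', |VS γ Ptr r π s'| ≤ C / (1 - γ) := by
    intro s'
    have := VS_bounds hγ0 hγ1 hP hπ hrlh s'
    rw [abs_le]
    constructor
    · have : -C / (1 - γ) = -(C / (1-γ)) := by ring
      linarith [ (VS_bounds hγ0 hγ1 hP hπ hrlh s').1 ]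
    · exact (VS_bounds hγ0 hγ1 hP hπ hrlh s').2
  have hRb' : ∀ s, |Rpol r π' s| ≤ C := abs_Rpol_le hπ' hrC hC
  set u : ℕ → ℝ := fun t => γ ^ t * ∑ s', visit Ptr π' ν t s' * Rpol r π' s' with hu
  set w : ℕ → ℝ := fun t => γ ^ t * ∑ s', visit Ptr π' ν t s' * VS γ Ptr r π s' with hw
  have Su : Summable u := summable_visit_weight hγ0 hγ1 hP hπ' hν hRb'
  have Sw : Summable w := summable_visit_weight hγ0 hγ1 hP hπ' hν hVSb
  have Sw' : Summable (fun t => w (t + 1)) := (summable_nat_add_iff 1).2 Sw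
  have claim1 : ∀ t : ℕ, γ ^ t * ∑ s', visit Ptr π' ν t s' *
      ((∑ a, π' s' a * Qa γ Ptr r π s' a) - VS γ Ptr r π s')
      = u t + (w (t + 1) - w t) := by
    intro t
    have hQexp : ∀ s', ∑ a, π' s' a * Qa γ Ptr r π s' a
        = Rpol r π' s' + γ * ∑ a, ∑ s'', π' s' a * (Ptr s' a s'' * VS γ Ptr r π s'') := by
      intro s'
      unfold Qa Rpol
      rw [Finset.sum_congr rfl fun a (_ : a ∈ (Finset.univ : Finset (JointAct A))) => mul_add
        (π' s' a) (r s' a) (γ * ∑ s'', Ptr s' a s'' * VS γ Ptr r π s''),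
        Finset.sum_add_distrib]
      congr 1
      rw [Finset.mul_sum]
      refine Finset.sum_congr rfl fun a _ => ?_
      rw [Finset.mul_sum, Finset.mul_sum, Finset.mul_sum]
      exact Finset.sum_congr rfl fun s'' _ => by ring
    have hnext : ∑ s', visit Ptr π' ν t s' *
        (∑ a, ∑ s'', π' s' a * (Ptr s' a s'' * VS γ Ptr r π s''))
        = ∑ s'', visit Ptr π' ν (t+1) s'' * VS γ Ptr r π s'' := by
      have hv : ∀ s'', visit Ptr π' ν (t+1) s''
          = ∑ s', ∑ a, visit Ptr π' ν t s' * π' s' a * Ptr s' a s'' := fun s'' => rfl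
      calc ∑ s', visit Ptr π' ν t s' *
            (∑ a, ∑ s'', π' s' a * (Ptr s' a s'' * VS γ Ptr r π s''))
          = ∑ s', ∑ a, ∑ s'', visit Ptr π' ν t s' * π' s' a * Ptr s' a s''
              * VS γ Ptr r π s'' := by
            refine Finset.sum_congr rfl fun s' _ => ?_
            rw [Finset.mul_sum]
            refine Finset.sum_congr rfl fun a _ => ?_
            rw [Finset.mul_sum]
            exact Finset.sum_congr rfl fun s'' _ => by ring
        _ = ∑ s', ∑ s'', ∑ a, visit Ptr π' ν t s' * π' s' a * Ptr s' a s''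
              * VS γ Ptr r π s'' := Finset.sum_congr rfl fun s' _ => Finset.sum_comm
        _ = ∑ s'', ∑ s', ∑ a, visit Ptr π' ν t s' * π' s' a * Ptr s' a s''
              * VS γ Ptr r π s'' := Finset.sum_comm
        _ = ∑ s'', visit Ptr π' ν (t+1) s'' * VS γ Ptr r π s'' := by
            refine Finset.sum_congr rfl fun s'' _ => ?_
            rw [hv s'', Finset.sum_mul]
            refine Finset.sum_congr rfl fun s' _ => ?_
            rw [Finset.sum_mul]
    have expand : ∑ s', visit Ptr π' ν t s' *
        ((∑ a, π' s' a * Qa γ Ptr r π s' a) - VS γ Ptr r π s')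
        = (∑ s', visit Ptr π' ν t s' * Rpol r π' s')
          + γ * (∑ s'', visit Ptr π' ν (t+1) s'' * VS γ Ptr r π s'')
          - ∑ s', visit Ptr π' ν t s' * VS γ Ptr r π s' := by
      rw [← hnext, Finset.mul_sum, ← Finset.sum_add_distrib, ← Finset.sum_sub_distrib]
      refine Finset.sum_congr rfl fun s' _ => ?_
      rw [hQexp s']
      ring
    rw [expand, hu, hw]
    simp only []
    rw [pow_succ]
    ring
  rw [tsum_congr claim1]
  rw [Summable.tsum_add Su (Sw'.sub Sw), Summable.tsum_sub Sw' Sw]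
  have h0 : ∑' t, w (t+1) = (∑' t, w t) - w 0 := by
    have := Summable.tsum_eq_zero_add Sw
    linarith
  have hw0 : w 0 = Vval γ Ptr r π ν := by
    rw [hw]
    simp only [pow_zero, one_mul]
    rw [Vval_lin hγ0 hγ1 hP hπ hrC hC]
    rfl
  have hu_eq : ∑' t, u t = Vval γ Ptr r π' ν := (Vval_eq).symm
  rw [h0, hw0, hu_eq]
  ring

lemma VS_mono_of_improve (hγ0 : 0 ≤ γ) (hγ1 : γ < 1) (hP : IsKernel Ptr)
    (hπ : IsPol π) (hπ' : IsPol π')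
    {C : ℝ} (hrC : ∀ s a, |r s a| ≤ C) (hC : 0 ≤ C)
    (hg : ∀ s', VS γ Ptr r π s' ≤ ∑ a, π' s' a * Qa γ Ptr r π s' a) (s : S) :
    VS γ Ptr r π s ≤ VS γ Ptr r π' s := by
  have hds := dirac_isDist s
  have hPDL := PDL hγ0 hγ1 hP hπ hπ' hds hrC hC
  have hnn : 0 ≤ ∑' t : ℕ, γ ^ t * ∑ s', visit Ptr π' (dirac s) t s' *
      ((∑ a, π' s' a * Qa γ Ptr r π s' a) - VS γ Ptr r π s') := by
    refine tsum_nonneg fun t => mul_nonneg (pow_nonneg hγ0 t) ?_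
    refine Finset.sum_nonneg fun s' _ => mul_nonneg
      (visit_nonneg hP hπ' hds.1 t s') (sub_nonneg.2 (hg s'))
  rw [VS_eq_Vval_dirac (π := π), VS_eq_Vval_dirac (π := π')]
  linarith [hPDL]

end MDP2


section Calc1

variable {P : Fin N → Finset (Fin N)}

lemma param_apply (θ0 v : Param S A P) (τ : ℝ) (i : Fin N) (s : S) (p : ParAct A P i)
    (b : A i) : (θ0 + τ • v) i s p b = θ0 i s p b + τ * v i s p b := rfl

/-- Conditional mean of `v` under the local policy. -/
noncomputable def mbar (P : Fin N → Finset (Fin N)) (ψ v : Param S A P) (i : Fin N) (s : S)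
    (p : ParAct A P i) : ℝ :=
  ∑ b, locPol P ψ i s p b * v i s p b

/-- Sum of centered direction entries along a joint action. -/
noncomputable def Tfun (P : Fin N → Finset (Fin N)) (ψ v : Param S A P) (s : S)
    (a : JointAct A) : ℝ :=
  ∑ i, (v i s (restr A P i a) (a i) - mbar P ψ v i s (restr A P i a))

/-- First directional derivative of `ψ ↦ ∑ₐ w a ⬝ π_ψ(a|s)` in direction `v`. -/
noncomputable def Aform (P : Fin N → Finset (Fin N)) (w : JointAct A → ℝ) (s : S)
    (ψ v : Param S A P) : ℝ :=
  ∑ a, w a * (bnPol P ψ s a * Tfun P ψ v s a)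

noncomputable def mdash (P : Fin N → Finset (Fin N)) (ψ v : Param S A P) (i : Fin N) (s : S)
    (p : ParAct A P i) : ℝ :=
  ∑ b, locPol P ψ i s p b * (v i s p b - mbar P ψ v i s p) * v i s p b

/-- Second directional derivative. -/
noncomputable def Bform (P : Fin N → Finset (Fin N)) (w : JointAct A → ℝ) (s : S)
    (ψ v : Param S A P) : ℝ :=
  ∑ a, w a * (bnPol P ψ s a *
    ((Tfun P ψ v s a) ^ 2 - ∑ i, mdash P ψ v i s (restr A P i a)))

lemma hasDerivAt_locPol (θ0 v : Param S A P) (i : Fin N) (s : S) (p : ParAct A P i)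
    (b : A i) (τ0 : ℝ) :
    HasDerivAt (fun τ => locPol P (θ0 + τ • v) i s p b)
      (locPol P (θ0 + τ0 • v) i s p b * (v i s p b - mbar P (θ0 + τ0 • v) v i s p)) τ0 := by
  have hexp : ∀ c u : ℝ, HasDerivAt (fun τ : ℝ => Real.exp (c + τ * u))
      (Real.exp (c + τ0 * u) * u) τ0 := by
    intro c u
    have h1 : HasDerivAt (fun τ : ℝ => c + τ * u) u τ0 := by
      simpa using ((hasDerivAt_id τ0).mul_const u).const_add c
    simpa using h1.exp
  have hnum := hexp (θ0 i s p b) (v i s p b)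
  have hden : HasDerivAt (fun τ => ∑ b', Real.exp (θ0 i s p b' + τ * v i s p b'))
      (∑ b', Real.exp (θ0 i s p b' + τ0 * v i s p b') * v i s p b') τ0 :=
    HasDerivAt.fun_sum (fun b' _ => hexp (θ0 i s p b') (v i s p b'))
  have hden_pos : ∀ τ : ℝ, 0 < ∑ b', Real.exp (θ0 i s p b' + τ * v i s p b') := by
    intro τ
    exact Finset.sum_pos (fun _ _ => Real.exp_pos _) Finset.univ_nonempty
  have hdiv := hnum.fun_div hden (hden_pos τ0).ne'
  have heq : (fun τ => locPol P (θ0 + τ • v) i s p b)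
      = fun τ => Real.exp (θ0 i s p b + τ * v i s p b)
          / ∑ b', Real.exp (θ0 i s p b' + τ * v i s p b') := by
    funext τ
    simp only [locPol, param_apply]
  rw [heq]
  refine hdiv.congr_deriv ?_
  set D := ∑ b', Real.exp (θ0 i s p b' + τ0 * v i s p b') with hD
  set E := fun b' => Real.exp (θ0 i s p b' + τ0 * v i s p b') with hE
  have hloc : ∀ b', locPol P (θ0 + τ0 • v) i s p b' = E b' / D := by
    intro b'
    simp only [locPol, param_apply, hE, hD]
  have hmb : mbar P (θ0 + τ0 • v) v i s p = (∑ b', E b' * v i s p b') / D := by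
    unfold mbar
    rw [Finset.sum_div]
    refine Finset.sum_congr rfl fun b' _ => ?_
    rw [hloc b']
    ring
  rw [hloc b, hmb]
  have hDne : D ≠ 0 := (hden_pos τ0).ne'
  have hs : ∑ x, E x * v i s p x = ∑ b', Real.exp (θ0 i s p b' + τ0 * v i s p b') * v i s p b' :=
    rfl
  have heb : E b = Real.exp (θ0 i s p b + τ0 * v i s p b) := rfl
  rw [hs, heb]
  field_simp

lemma hasDerivAt_mbar (θ0 v : Param S A P) (i : Fin N) (s : S) (p : ParAct A P i) (τ0 : ℝ) :
    HasDerivAt (fun τ => mbar P (θ0 + τ • v) v i s p)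
      (mdash P (θ0 + τ0 • v) v i s p) τ0 := by
  unfold mbar mdash
  exact HasDerivAt.fun_sum fun b _ => (hasDerivAt_locPol θ0 v i s p b τ0).mul_const (v i s p b)

lemma hasDerivAt_bnPol (θ0 v : Param S A P) (s : S) (a : JointAct A) (τ0 : ℝ) :
    HasDerivAt (fun τ => bnPol P (θ0 + τ • v) s a)
      (bnPol P (θ0 + τ0 • v) s a * Tfun P (θ0 + τ0 • v) v s a) τ0 := by
  have hprod := HasDerivAt.fun_finsetProd (u := Finset.univ)
    (f := fun i (τ : ℝ) => locPol P (θ0 + τ • v) i s (restr A P i a) (a i))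
    (f' := fun i => locPol P (θ0 + τ0 • v) i s (restr A P i a) (a i)
      * (v i s (restr A P i a) (a i) - mbar P (θ0 + τ0 • v) v i s (restr A P i a)))
    (fun i _ => hasDerivAt_locPol θ0 v i s (restr A P i a) (a i) τ0)
  have heq : (fun τ : ℝ => ∏ i, locPol P (θ0 + τ • v) i s (restr A P i a) (a i))
      = fun τ : ℝ => bnPol P (θ0 + τ • v) s a := by
    funext τ
    rfl
  rw [heq] at hprod
  refine hprod.congr_deriv ?_
  unfold Tfun
  rw [Finset.mul_sum]
  refine Finset.sum_congr rfl fun i _ => ?_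
  rw [smul_eq_mul]
  have : bnPol P (θ0 + τ0 • v) s a
      = (∏ j ∈ Finset.univ.erase i, locPol P (θ0 + τ0 • v) j s (restr A P j a) (a j))
        * locPol P (θ0 + τ0 • v) i s (restr A P i a) (a i) := by
    rw [Finset.prod_erase_mul _ _ (Finset.mem_univ i)]
    rfl
  rw [this]
  ring

lemma hasDerivAt_Fw (θ0 v : Param S A P) (w : JointAct A → ℝ) (s : S) (τ0 : ℝ) :
    HasDerivAt (fun τ => ∑ a, w a * bnPol P (θ0 + τ • v) s a)
      (Aform P w s (θ0 + τ0 • v) v) τ0 := by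
  unfold Aform
  exact HasDerivAt.fun_sum fun a _ => (hasDerivAt_bnPol θ0 v s a τ0).const_mul (w a)

lemma hasDerivAt_Tfun (θ0 v : Param S A P) (s : S) (a : JointAct A) (τ0 : ℝ) :
    HasDerivAt (fun τ => Tfun P (θ0 + τ • v) v s a)
      (- ∑ i, mdash P (θ0 + τ0 • v) v i s (restr A P i a)) τ0 := by
  unfold Tfun
  rw [← Finset.sum_neg_distrib]
  exact HasDerivAt.fun_sum fun i _ =>
    HasDerivAt.const_sub _ (hasDerivAt_mbar θ0 v i s (restr A P i a) τ0)

lemma hasDerivAt_Aform (θ0 v : Param S A P) (w : JointAct A → ℝ) (s : S) (τ0 : ℝ) :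
    HasDerivAt (fun τ => Aform P w s (θ0 + τ • v) v)
      (Bform P w s (θ0 + τ0 • v) v) τ0 := by
  unfold Aform Bform
  refine HasDerivAt.fun_sum fun a _ => HasDerivAt.const_mul (w a) ?_
  have h := (hasDerivAt_bnPol θ0 v s a τ0).fun_mul (hasDerivAt_Tfun θ0 v s a τ0)
  refine h.congr_deriv ?_
  ring

end Calc1


section Calc2

variable {P : Fin N → Finset (Fin N)}

lemma Tfun_add (ψ v1 v2 : Param S A P) (s : S) (a : JointAct A) :
    Tfun P ψ (v1 + v2) s a = Tfun P ψ v1 s a + Tfun P ψ v2 s a := by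
  unfold Tfun mbar
  rw [← Finset.sum_add_distrib]
  refine Finset.sum_congr rfl fun i _ => ?_
  simp only [Pi.add_apply]
  rw [Finset.sum_congr rfl fun b (_ : b ∈ Finset.univ) =>
    mul_add (locPol P ψ i s (restr A P i a) b) (v1 i s (restr A P i a) b)
      (v2 i s (restr A P i a) b), Finset.sum_add_distrib]
  ring

lemma Tfun_smul (ψ v : Param S A P) (c : ℝ) (s : S) (a : JointAct A) :
    Tfun P ψ (c • v) s a = c * Tfun P ψ v s a := by
  unfold Tfun mbar
  rw [Finset.mul_sum]
  refine Finset.sum_congr rfl fun i _ => ?_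
  simp only [Pi.smul_apply, smul_eq_mul]
  rw [Finset.sum_congr rfl fun b (_ : b ∈ Finset.univ) => by
      rw [show locPol P ψ i s (restr A P i a) b * (c * v i s (restr A P i a) b)
        = c * (locPol P ψ i s (restr A P i a) b * v i s (restr A P i a) b) from by ring],
    ← Finset.mul_sum]
  ring

lemma Aform_add (w : JointAct A → ℝ) (s : S) (ψ v1 v2 : Param S A P) :
    Aform P w s ψ (v1 + v2) = Aform P w s ψ v1 + Aform P w s ψ v2 := by
  unfold Aform
  rw [← Finset.sum_add_distrib]
  refine Finset.sum_congr rfl fun a _ => ?_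
  rw [Tfun_add]
  ring

lemma Aform_smul (w : JointAct A → ℝ) (s : S) (ψ v : Param S A P) (c : ℝ) :
    Aform P w s ψ (c • v) = c * Aform P w s ψ v := by
  unfold Aform
  rw [Finset.mul_sum]
  refine Finset.sum_congr rfl fun a _ => ?_
  rw [Tfun_smul]
  ring

noncomputable def AformL (P : Fin N → Finset (Fin N)) (w : JointAct A → ℝ) (s : S)
    (ψ : Param S A P) : Param S A P →ₗ[ℝ] ℝ where
  toFun v := Aform P w s ψ v
  map_add' v1 v2 := Aform_add w s ψ v1 v2
  map_smul' c v := by simp only [smul_eq_mul, RingHom.id_apply]; exact Aform_smul w s ψ v c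

lemma AformL_apply (w : JointAct A → ℝ) (s : S) (ψ v : Param S A P) :
    AformL P w s ψ v = Aform P w s ψ v := rfl

lemma param_decomp (u : Param S A P) :
    u = ∑ i, ∑ s' : S, ∑ p : ParAct A P i, ∑ ai, u i s' p ai • basis P i s' p ai := by
  funext j s0 p0 b0
  simp only [Finset.sum_apply]
  symm
  rw [Finset.sum_eq_single j]
  · rw [Finset.sum_eq_single s0]
    · rw [Finset.sum_eq_single p0]
      · rw [Finset.sum_eq_single b0]
        · simp only [Pi.smul_apply, smul_eq_mul, basis, Pi.single_eq_same]
          simp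
        · intro b hb hbne
          simp only [Pi.smul_apply, smul_eq_mul, basis, Pi.single_eq_same]
          simp [Ne.symm hbne]
        · intro h
          exact absurd (Finset.mem_univ b0) h
      · intro p hp hpne
        simp only [Pi.smul_apply, smul_eq_mul, basis, Pi.single_eq_same]
        simp [Ne.symm hpne]
      · intro h
        exact absurd (Finset.mem_univ p0) h
    · intro s' hs' hsne
      simp only [Pi.smul_apply, smul_eq_mul, basis, Pi.single_eq_same]
      simp [Ne.symm hsne]
    · intro h
      exact absurd (Finset.mem_univ s0) h
  · intro i hi hine
    simp only [Pi.smul_apply, smul_eq_mul, basis]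
    rw [Finset.sum_congr rfl fun s' (_ : s' ∈ Finset.univ) => Finset.sum_congr rfl
      fun p (_ : p ∈ Finset.univ) => Finset.sum_congr rfl fun ai (_ : ai ∈ Finset.univ) => by
        rw [Pi.single_eq_of_ne (Ne.symm hine)]]
    simp
  · intro h
    exact absurd (Finset.mem_univ j) h

lemma basis_entry_zero {i : Fin N} {st : S} {p : ParAct A P i} {ai : A i}
    (j : Fin N) (s : S) (p' : ParAct A P j) (b : A j) (hs : s ≠ st) :
    basis P i st p ai j s p' b = 0 := by
  unfold basis
  by_cases hj : j = i
  · subst hj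
    rw [Pi.single_eq_same]
    simp [hs]
  · rw [Pi.single_eq_of_ne hj]
    rfl

lemma Aform_zero_of_dir (w : JointAct A → ℝ) (s : S) (ψ v : Param S A P)
    (h : ∀ (i : Fin N) (p : ParAct A P i) (b : A i), v i s p b = 0) :
    Aform P w s ψ v = 0 := by
  unfold Aform Tfun mbar
  refine Finset.sum_eq_zero fun a _ => ?_
  rw [Finset.sum_eq_zero fun i (_ : i ∈ Finset.univ) => by
    rw [h i (restr A P i a) (a i), Finset.sum_eq_zero fun b (_ : b ∈ Finset.univ) => by
      rw [h i (restr A P i a) b, mul_zero]]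
    ring]
  ring

lemma abs_Bform_le (hDAG : IsDAG P) (w : JointAct A → ℝ) (s : S) (ψ v : Param S A P)
    {W : ℝ} (hw : ∀ a, |w a| ≤ W) (M : Fin N → ℝ)
    (hM : ∀ (i : Fin N) (p : ParAct A P i) (b : A i), |v i s p b| ≤ M i) :
    |Bform P w s ψ v| ≤ W * (4 * (∑ i, M i) ^ 2 + 2 * ∑ i, (M i) ^ 2) := by
  have hpol := bnPol_isPol hDAG ψ
  have hM0 : ∀ i, 0 ≤ M i := by
    intro i
    have p : ParAct A P i := Classical.arbitrary _
    have b : A i := Classical.arbitrary _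
    exact le_trans (abs_nonneg _) (hM i p b)
  have hW0 : 0 ≤ W := le_trans (abs_nonneg _) (hw (Classical.arbitrary _))
  have hmbar : ∀ (i : Fin N) (p : ParAct A P i), |mbar P ψ v i s p| ≤ M i := by
    intro i p
    unfold mbar
    calc |∑ b, locPol P ψ i s p b * v i s p b| ≤ ∑ b, |locPol P ψ i s p b * v i s p b| :=
          Finset.abs_sum_le_sum_abs _ _
      _ ≤ ∑ b, locPol P ψ i s p b * M i := by
          refine Finset.sum_le_sum fun b _ => ?_
          rw [abs_mul, abs_of_nonneg (locPol_nonneg ψ i s p b)]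
          exact mul_le_mul_of_nonneg_left (hM i p b) (locPol_nonneg ψ i s p b)
      _ = M i := by rw [← Finset.sum_mul, locPol_sum_one, one_mul]
  have hT : ∀ a : JointAct A, |Tfun P ψ v s a| ≤ 2 * ∑ i, M i := by
    intro a
    unfold Tfun
    calc |∑ i, (v i s (restr A P i a) (a i) - mbar P ψ v i s (restr A P i a))|
        ≤ ∑ i, |v i s (restr A P i a) (a i) - mbar P ψ v i s (restr A P i a)| :=
          Finset.abs_sum_le_sum_abs _ _
      _ ≤ ∑ i, 2 * M i := by
          refine Finset.sum_le_sum fun i _ => ?_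
          have h1 := hM i (restr A P i a) (a i)
          have h2 := hmbar i (restr A P i a)
          calc |v i s (restr A P i a) (a i) - mbar P ψ v i s (restr A P i a)|
              ≤ |v i s (restr A P i a) (a i)| + |mbar P ψ v i s (restr A P i a)| :=
                abs_sub _ _
            _ ≤ 2 * M i := by linarith
      _ = 2 * ∑ i, M i := by rw [Finset.mul_sum]
  have hmd : ∀ (i : Fin N) (p : ParAct A P i), |mdash P ψ v i s p| ≤ 2 * (M i) ^ 2 := by
    intro i p
    unfold mdash
    calc |∑ b, locPol P ψ i s p b * (v i s p b - mbar P ψ v i s p) * v i s p b|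
        ≤ ∑ b, |locPol P ψ i s p b * (v i s p b - mbar P ψ v i s p) * v i s p b| :=
          Finset.abs_sum_le_sum_abs _ _
      _ ≤ ∑ b, locPol P ψ i s p b * (2 * (M i) ^ 2) := by
          refine Finset.sum_le_sum fun b _ => ?_
          rw [abs_mul, abs_mul, abs_of_nonneg (locPol_nonneg ψ i s p b)]
          have h1 := hM i p b
          have h2 := hmbar i p
          have h3 : |v i s p b - mbar P ψ v i s p| ≤ 2 * M i := by
            calc |v i s p b - mbar P ψ v i s p| ≤ |v i s p b| + |mbar P ψ v i s p| :=
                abs_sub _ _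
              _ ≤ 2 * M i := by linarith
          have h4 : |v i s p b - mbar P ψ v i s p| * |v i s p b| ≤ (2 * M i) * M i := by
            exact mul_le_mul h3 h1 (abs_nonneg _) (mul_nonneg (by norm_num) (hM0 i))
          calc locPol P ψ i s p b * |v i s p b - mbar P ψ v i s p| * |v i s p b|
              = locPol P ψ i s p b * (|v i s p b - mbar P ψ v i s p| * |v i s p b|) := by ring
            _ ≤ locPol P ψ i s p b * ((2 * M i) * M i) :=
                mul_le_mul_of_nonneg_left h4 (locPol_nonneg ψ i s p b)
            _ = locPol P ψ i s p b * (2 * (M i) ^ 2) := by ring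
      _ = 2 * (M i) ^ 2 := by rw [← Finset.sum_mul, locPol_sum_one, one_mul]
  have hX : ∀ a : JointAct A,
      |(Tfun P ψ v s a) ^ 2 - ∑ i, mdash P ψ v i s (restr A P i a)|
        ≤ 4 * (∑ i, M i) ^ 2 + 2 * ∑ i, (M i) ^ 2 := by
    intro a
    have h1 : (Tfun P ψ v s a) ^ 2 ≤ 4 * (∑ i, M i) ^ 2 := by
      have := hT a
      have h2 : (Tfun P ψ v s a) ^ 2 = |Tfun P ψ v s a| ^ 2 := (sq_abs _).symm
      rw [h2]
      calc |Tfun P ψ v s a| ^ 2 ≤ (2 * ∑ i, M i) ^ 2 :=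
            pow_le_pow_left₀ (abs_nonneg _) (hT a) 2
        _ = 4 * (∑ i, M i) ^ 2 := by ring
    have h2 : |∑ i, mdash P ψ v i s (restr A P i a)| ≤ 2 * ∑ i, (M i) ^ 2 := by
      calc |∑ i, mdash P ψ v i s (restr A P i a)| ≤ ∑ i, |mdash P ψ v i s (restr A P i a)| :=
            Finset.abs_sum_le_sum_abs _ _
        _ ≤ ∑ i, 2 * (M i) ^ 2 := Finset.sum_le_sum fun i _ => hmd i (restr A P i a)
        _ = 2 * ∑ i, (M i) ^ 2 := by rw [Finset.mul_sum]
    calc |(Tfun P ψ v s a) ^ 2 - ∑ i, mdash P ψ v i s (restr A P i a)|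
        ≤ |(Tfun P ψ v s a) ^ 2| + |∑ i, mdash P ψ v i s (restr A P i a)| := abs_sub _ _
      _ ≤ 4 * (∑ i, M i) ^ 2 + 2 * ∑ i, (M i) ^ 2 := by
          rw [abs_of_nonneg (sq_nonneg _)]
          exact add_le_add h1 h2
  unfold Bform
  calc |∑ a, w a * (bnPol P ψ s a * ((Tfun P ψ v s a) ^ 2
        - ∑ i, mdash P ψ v i s (restr A P i a)))|
      ≤ ∑ a, |w a * (bnPol P ψ s a * ((Tfun P ψ v s a) ^ 2
        - ∑ i, mdash P ψ v i s (restr A P i a)))| := Finset.abs_sum_le_sum_abs _ _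
    _ ≤ ∑ a, W * (bnPol P ψ s a * (4 * (∑ i, M i) ^ 2 + 2 * ∑ i, (M i) ^ 2)) := by
        refine Finset.sum_le_sum fun a _ => ?_
        rw [abs_mul, abs_mul, abs_of_nonneg (hpol.1 s a)]
        refine mul_le_mul (hw a) ?_ (mul_nonneg (hpol.1 s a) (abs_nonneg _)) hW0
        exact mul_le_mul_of_nonneg_left (hX a) (hpol.1 s a)
    _ = W * (4 * (∑ i, M i) ^ 2 + 2 * ∑ i, (M i) ^ 2) := by
        rw [← Finset.mul_sum, ← Finset.sum_mul, hpol.2 s, one_mul]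

lemma continuous_locPol_line (θ0 u : Param S A P) (i : Fin N) (s : S) (p : ParAct A P i)
    (b : A i) : Continuous (fun τ : ℝ => locPol P (θ0 + τ • u) i s p b) := by
  have heq : (fun τ : ℝ => locPol P (θ0 + τ • u) i s p b)
      = fun τ : ℝ => Real.exp (θ0 i s p b + τ * u i s p b)
          / ∑ b', Real.exp (θ0 i s p b' + τ * u i s p b') := by
    funext τ
    simp only [locPol, param_apply]
  rw [heq]
  have hc : ∀ b' : A i, Continuous (fun τ : ℝ => Real.exp (θ0 i s p b' + τ * u i s p b')) :=
    fun b' => Real.continuous_exp.comp (continuous_const.add (continuous_id.mul continuous_const))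
  refine (hc b).div (continuous_finset_sum _ fun b' _ => hc b') fun τ => ?_
  exact (Finset.sum_pos (fun _ _ => Real.exp_pos _) Finset.univ_nonempty).ne'

lemma continuous_bnPol_line (θ0 u : Param S A P) (s : S) (a : JointAct A) :
    Continuous (fun τ : ℝ => bnPol P (θ0 + τ • u) s a) := by
  have heq : (fun τ : ℝ => bnPol P (θ0 + τ • u) s a)
      = fun τ : ℝ => ∏ i, locPol P (θ0 + τ • u) i s (restr A P i a) (a i) := rfl
  rw [heq]
  exact continuous_finset_prod _ fun i _ => continuous_locPol_line θ0 u i s (restr A P i a) (a i)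

lemma continuous_visit_line (θ0 u : Param S A P) {Ptr : S → JointAct A → S → ℝ}
    (μ : S → ℝ) (t : ℕ) (s : S) :
    Continuous (fun τ : ℝ => visit Ptr (bnPol P (θ0 + τ • u)) μ t s) := by
  induction t generalizing s with
  | zero => exact continuous_const
  | succ t ih =>
    have heq : (fun τ : ℝ => visit Ptr (bnPol P (θ0 + τ • u)) μ (t+1) s)
        = fun τ : ℝ => ∑ s0, ∑ a, visit Ptr (bnPol P (θ0 + τ • u)) μ t s0
            * bnPol P (θ0 + τ • u) s0 a * Ptr s0 a s := rfl
    rw [heq]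
    refine continuous_finset_sum _ fun s0 _ => continuous_finset_sum _ fun a _ => ?_
    exact ((ih s0).mul (continuous_bnPol_line θ0 u s0 a)).mul continuous_const

lemma continuous_dvisit_line (hDAG : IsDAG P) {γ : ℝ} (hγ0 : 0 ≤ γ) (hγ1 : γ < 1)
    {Ptr : S → JointAct A → S → ℝ} (hP : IsKernel Ptr) {μ : S → ℝ} (hμ : IsDist μ)
    (θ0 u : Param S A P) (s : S) :
    Continuous (fun τ : ℝ => dvisit γ Ptr (bnPol P (θ0 + τ • u)) μ s) := by
  have heq : (fun τ : ℝ => dvisit γ Ptr (bnPol P (θ0 + τ • u)) μ s)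
      = fun τ : ℝ => ∑' t : ℕ, γ ^ t * visit Ptr (bnPol P (θ0 + τ • u)) μ t s := rfl
  rw [heq]
  refine continuous_tsum (fun t => continuous_const.mul (continuous_visit_line θ0 u μ t s))
    (summable_geometric_of_lt_one hγ0 hγ1) fun t τ => ?_
  have hpol := bnPol_isPol hDAG (θ0 + τ • u)
  have h0 := visit_nonneg hP hpol hμ.1 t s
  have h1 := visit_le_one hP hpol hμ t s
  rw [Real.norm_eq_abs, abs_mul, abs_pow, abs_of_nonneg hγ0, abs_of_nonneg h0]
  calc γ ^ t * visit Ptr (bnPol P (θ0 + τ • u)) μ t s ≤ γ ^ t * 1 :=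
        mul_le_mul_of_nonneg_left h1 (pow_nonneg hγ0 t)
    _ = γ ^ t := mul_one _

end Calc2


section PG

variable {P : Fin N → Finset (Fin N)}
variable {γ : ℝ} {Ptr : S → JointAct A → S → ℝ} {r : S → JointAct A → ℝ} {μ : S → ℝ}

lemma locPol_line_off_state (θ e : Param S A P) (τ : ℝ) (s' : S)
    (h : ∀ (j : Fin N) (p' : ParAct A P j) (b : A j), e j s' p' b = 0)
    (i : Fin N) (p : ParAct A P i) (b : A i) :
    locPol P (θ + τ • e) i s' p b = locPol P θ i s' p b := by
  unfold locPol
  have harg : ∀ b' : A i, (θ + τ • e) i s' p b' = θ i s' p b' := by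
    intro b'
    rw [param_apply, h i p b', mul_zero, add_zero]
  rw [harg b, Finset.sum_congr rfl fun b' _ => by rw [harg b']]

lemma bnPol_line_off_state (θ e : Param S A P) (τ : ℝ) (s' : S)
    (h : ∀ (j : Fin N) (p' : ParAct A P j) (b : A j), e j s' p' b = 0) (a : JointAct A) :
    bnPol P (θ + τ • e) s' a = bnPol P θ s' a := by
  unfold bnPol bnPolGen
  exact Finset.prod_congr rfl fun i _ =>
    locPol_line_off_state θ e τ s' h i (restr A P i a) (a i)

lemma Aform_one_zero (hDAG : IsDAG P) (st : S) (ψ v : Param S A P) :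
    Aform P (fun _ => (1:ℝ)) st ψ v = 0 := by
  have h := hasDerivAt_Fw (P := P) ψ v (fun _ => (1:ℝ)) st 0
  have hconst : (fun τ : ℝ => ∑ a, (1:ℝ) * bnPol P (ψ + τ • v) st a)
      = fun _ : ℝ => (1:ℝ) := by
    funext τ
    rw [Finset.sum_congr rfl fun a (_ : a ∈ Finset.univ) => one_mul (bnPol P (ψ + τ • v) st a)]
    exact (bnPol_isPol hDAG (ψ + τ • v)).2 st
  rw [hconst] at h
  have h2 := h.unique (hasDerivAt_const 0 1)
  have h0 : ψ + (0:ℝ) • v = ψ := by rw [zero_smul, add_zero]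
  rw [h0] at h2
  exact h2

lemma Aform_center (hDAG : IsDAG P) (w : JointAct A → ℝ) (c : ℝ) (st : S)
    (ψ v : Param S A P) :
    Aform P w st ψ v = Aform P (fun a => w a - c) st ψ v := by
  have h1 : Aform P w st ψ v
      = Aform P (fun a => w a - c) st ψ v + c * Aform P (fun _ => (1:ℝ)) st ψ v := by
    unfold Aform
    rw [Finset.mul_sum, ← Finset.sum_add_distrib]
    refine Finset.sum_congr rfl fun a _ => ?_
    ring
  rw [h1, Aform_one_zero hDAG, mul_zero, add_zero]

lemma dvisit_nonneg (hP : IsKernel Ptr) {π : Pol S A} (hπ : IsPol π) (hγ0 : 0 ≤ γ)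
    (hμ : IsDist μ) (s : S) : 0 ≤ dvisit γ Ptr π μ s :=
  tsum_nonneg fun t => mul_nonneg (pow_nonneg hγ0 t) (visit_nonneg hP hπ hμ.1 t s)

lemma dvisit_le (hγ0 : 0 ≤ γ) (hγ1 : γ < 1) (hP : IsKernel Ptr) {π : Pol S A}
    (hπ : IsPol π) (hμ : IsDist μ) (s : S) : dvisit γ Ptr π μ s ≤ 1 / (1 - γ) := by
  have hsum : Summable (fun t : ℕ => γ ^ t * visit Ptr π μ t s) := by
    refine summable_geom_bound hγ0 hγ1 (C := 1) fun t => ?_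
    rw [abs_mul, abs_pow, abs_of_nonneg hγ0, abs_of_nonneg (visit_nonneg hP hπ hμ.1 t s),
      one_mul]
    exact le_trans (mul_le_mul_of_nonneg_left (visit_le_one hP hπ hμ t s)
      (pow_nonneg hγ0 t)) (le_of_eq (mul_one _))
  have hle : ∀ t : ℕ, γ ^ t * visit Ptr π μ t s ≤ γ ^ t := fun t => by
    calc γ ^ t * visit Ptr π μ t s ≤ γ ^ t * 1 :=
        mul_le_mul_of_nonneg_left (visit_le_one hP hπ hμ t s) (pow_nonneg hγ0 t)
      _ = γ ^ t := mul_one _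

  calc dvisit γ Ptr π μ s ≤ ∑' t : ℕ, γ ^ t :=
        Summable.tsum_le_tsum hle hsum (summable_geometric_of_lt_one hγ0 hγ1)
    _ = (1 - γ)⁻¹ := tsum_geometric_of_lt_one hγ0 hγ1
    _ = 1 / (1 - γ) := (one_div _).symm

lemma summable_dvisit_term (hγ0 : 0 ≤ γ) (hγ1 : γ < 1) (hP : IsKernel Ptr) {π : Pol S A}
    (hπ : IsPol π) (hμ : IsDist μ) (s : S) :
    Summable (fun t : ℕ => γ ^ t * visit Ptr π μ t s) := by
  refine summable_geom_bound hγ0 hγ1 (C := 1) fun t => ?_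
  rw [abs_mul, abs_pow, abs_of_nonneg hγ0, abs_of_nonneg (visit_nonneg hP hπ hμ.1 t s),
    one_mul]
  exact le_trans (mul_le_mul_of_nonneg_left (visit_le_one hP hπ hμ t s)
    (pow_nonneg hγ0 t)) (le_of_eq (mul_one _))

/-- Policy gradient factorization for BN softmax policies. -/
lemma gradV_eq (hDAG : IsDAG P) (hγ0 : 0 ≤ γ) (hγ1 : γ < 1) (hP : IsKernel Ptr)
    {C : ℝ} (hrC : ∀ s a, |r s a| ≤ C) (hC : 0 ≤ C) (hμ : IsDist μ)
    (θ : Param S A P) (i : Fin N) (st : S) (p : ParAct A P i) (ai : A i) :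
    gradV γ Ptr r μ P θ i st p ai
      = dvisit γ Ptr (bnPol P θ) μ st
        * Aform P (fun a => Qa γ Ptr r (bnPol P θ) st a) st θ (basis P i st p ai) := by
  classical
  set e := basis P i st p ai with he
  set w : JointAct A → ℝ := fun a => Qa γ Ptr r (bnPol P θ) st a with hwdef
  have hπ := bnPol_isPol hDAG θ
  have hπτ : ∀ τ : ℝ, IsPol (bnPol P (θ + τ • e)) := fun τ => bnPol_isPol hDAG _
  have hezero : ∀ (s' : S), s' ≠ st → ∀ (j : Fin N) (p' : ParAct A P j) (b : A j),
      e j s' p' b = 0 := by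
    intro s' hs' j p' b
    exact basis_entry_zero j s' p' b hs'
  set F : ℝ → ℝ := fun τ => ∑ a, w a * bnPol P (θ + τ • e) st a with hF
  set Dv : ℝ → ℝ := fun τ => dvisit γ Ptr (bnPol P (θ + τ • e)) μ st with hDv
  have h0 : θ + (0:ℝ) • e = θ := by rw [zero_smul, add_zero]
  have hVS : VS γ Ptr r (bnPol P θ) st = F 0 := by
    rw [Bellman_VS hγ0 hγ1 hP hπ hrC hC st, hF]
    simp only [h0]
    exact Finset.sum_congr rfl fun a _ => mul_comm _ _
  have key : ∀ τ : ℝ, Vval γ Ptr r (bnPol P (θ + τ • e)) μ - Vval γ Ptr r (bnPol P θ) μ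
      = Dv τ * (F τ - F 0) := by
    intro τ
    rw [PDL hγ0 hγ1 hP hπ (hπτ τ) hμ hrC hC]
    have hg0 : ∀ s', s' ≠ st →
        (∑ a, bnPol P (θ + τ • e) s' a * Qa γ Ptr r (bnPol P θ) s' a)
          - VS γ Ptr r (bnPol P θ) s' = 0 := by
      intro s' hs'
      rw [Finset.sum_congr rfl fun a (_ : a ∈ Finset.univ) => by
        rw [bnPol_line_off_state θ e τ s' (hezero s' hs') a]]
      rw [← Bellman_VS hγ0 hγ1 hP hπ hrC hC s', sub_self]
    have hcollapse : ∀ t : ℕ,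
        γ ^ t * ∑ s', visit Ptr (bnPol P (θ + τ • e)) μ t s' *
          ((∑ a, bnPol P (θ + τ • e) s' a * Qa γ Ptr r (bnPol P θ) s' a)
            - VS γ Ptr r (bnPol P θ) s')
        = (γ ^ t * visit Ptr (bnPol P (θ + τ • e)) μ t st) * (F τ - F 0) := by
      intro t
      rw [Finset.sum_eq_single st]
      · have hFτ : (∑ a, bnPol P (θ + τ • e) st a * Qa γ Ptr r (bnPol P θ) st a) = F τ := by
          exact Finset.sum_congr rfl fun a _ => mul_comm _ _
        rw [hFτ, hVS]
        ring
      · intro s' _ hs'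
        rw [hg0 s' hs', mul_zero]
      · intro h
        exact absurd (Finset.mem_univ st) h
    rw [tsum_congr hcollapse, tsum_mul_right]
    rfl
  have hFd : HasDerivAt F (Aform P w st θ e) 0 := by
    have h := hasDerivAt_Fw θ e w st 0
    rw [h0] at h
    exact h
  have hDc : Continuous Dv := continuous_dvisit_line hDAG hγ0 hγ1 hP hμ θ e st
  have hslope : ∀ τ : ℝ, slope (fun τ : ℝ => Vval γ Ptr r (bnPol P (θ + τ • e)) μ) 0 τ
      = Dv τ * slope F 0 τ := by
    intro τ
    rw [slope_def_field, slope_def_field]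
    have hV0 : Vval γ Ptr r (bnPol P (θ + (0:ℝ) • e)) μ = Vval γ Ptr r (bnPol P θ) μ := by
      rw [h0]
    rw [hV0, key τ]
    ring
  have hVd : HasDerivAt (fun τ : ℝ => Vval γ Ptr r (bnPol P (θ + τ • e)) μ)
      (Dv 0 * Aform P w st θ e) 0 := by
    rw [hasDerivAt_iff_tendsto_slope]
    have h1 : Filter.Tendsto Dv (nhdsWithin 0 {(0:ℝ)}ᶜ) (nhds (Dv 0)) :=
      (hDc.tendsto 0).mono_left nhdsWithin_le_nhds
    have h2 := hasDerivAt_iff_tendsto_slope.1 hFd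
    have h3 := h1.mul h2
    refine Filter.Tendsto.congr (fun τ => (hslope τ).symm) h3
  have hderiv : gradV γ Ptr r μ P θ i st p ai
      = deriv (fun τ : ℝ => Vval γ Ptr r (bnPol P (θ + τ • e)) μ) 0 := rfl
  rw [hderiv, hVd.deriv]
  have hDv0 : Dv 0 = dvisit γ Ptr (bnPol P θ) μ st := by
    rw [hDv]
    simp only [h0]
  rw [hDv0]

end PG


section Main

variable {P : Fin N → Finset (Fin N)}

lemma key_improve
    (hDAG : IsDAG P) {γ : ℝ} (hγ0 : 0 ≤ γ) (hγ1 : γ < 1)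
    {Ptr : S → JointAct A → S → ℝ} (hPtr : IsKernel Ptr)
    {r : S → JointAct A → ℝ} {rmin rmax : ℝ}
    (hr : ∀ s a, rmin ≤ r s a ∧ r s a ≤ rmax) (hrr : rmin < rmax)
    {C : ℝ} (hrC : ∀ s a, |r s a| ≤ C) (hC : 0 ≤ C)
    {μ : S → ℝ} (hμ : IsDist μ) {η : ℝ} (hη : 0 < η)
    (hηle : η ≤ (1 - γ) ^ 3 / (8 * N * (rmax - rmin))) (hN : 1 ≤ N)
    (θ θ' : Param S A P) (hup : θ' = θ + η • gradV γ Ptr r μ P θ) (st : S) :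
    VS γ Ptr r (bnPol P θ) st
      ≤ ∑ a, bnPol P θ' st a * Qa γ Ptr r (bnPol P θ) st a := by
  classical
  have h1γ : (0:ℝ) < 1 - γ := by linarith
  have hNpos : (0:ℝ) < N := by
    have : (1:ℝ) ≤ N := by exact_mod_cast hN
    linarith
  have hπ := bnPol_isPol hDAG θ
  set w : JointAct A → ℝ := fun a => Qa γ Ptr r (bnPol P θ) st a with hwdef
  set c : ℝ := (rmin + rmax) / (2 * (1 - γ)) with hcdef
  set W : ℝ := (rmax - rmin) / (2 * (1 - γ)) with hWdef
  have hW0 : 0 < W := div_pos (by linarith) (by linarith)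
  set wt : JointAct A → ℝ := fun a => w a - c with hwtdef
  have hwt : ∀ a, |wt a| ≤ W := by
    intro a
    have hQ := Qa_bounds hγ0 hγ1 hPtr hπ hr st a
    have ea : rmin / (1 - γ) = c - W := by
      rw [hcdef, hWdef]
      field_simp
      ring
    have eb : rmax / (1 - γ) = c + W := by
      rw [hcdef, hWdef]
      field_simp
      ring
    rw [abs_le]
    constructor
    · have := hQ.1
      rw [ea] at this
      simp only [hwtdef]
      linarith
    · have := hQ.2
      rw [eb] at this
      simp only [hwtdef]
      linarith
  have hδ : θ' - θ = η • gradV γ Ptr r μ P θ := by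
    rw [hup]
    exact add_sub_cancel_left θ _
  set d : ℝ := dvisit γ Ptr (bnPol P θ) μ st with hddef
  have hd0 : 0 ≤ d := dvisit_nonneg hPtr hπ hγ0 hμ st
  have hd1 : d ≤ 1 / (1 - γ) := dvisit_le hγ0 hγ1 hPtr hπ hμ st
  set afun : (i : Fin N) → ParAct A P i → A i → ℝ :=
    fun i p b => Aform P wt st θ (basis P i st p b) with hafdef
  have hgrad : ∀ (i : Fin N) (p : ParAct A P i) (b : A i),
      gradV γ Ptr r μ P θ i st p b = d * afun i p b := by
    intro i p b
    rw [gradV_eq hDAG hγ0 hγ1 hPtr hrC hC hμ θ i st p b]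
    rw [Aform_center hDAG _ c st θ (basis P i st p b)]
  have hδc : ∀ (i : Fin N) (p : ParAct A P i) (b : A i),
      (θ' - θ) i st p b = η * (d * afun i p b) := by
    intro i p b
    rw [hδ]
    have : (η • gradV γ Ptr r μ P θ) i st p b = η * gradV γ Ptr r μ P θ i st p b := rfl
    rw [this, hgrad i p b]
  set KA : ℝ := ∑ i, ∑ p, ∑ b, (afun i p b) ^ 2 with hKAdef
  have hKA0 : 0 ≤ KA :=
    Finset.sum_nonneg fun i _ => Finset.sum_nonneg fun p _ =>
      Finset.sum_nonneg fun b _ => sq_nonneg _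
  -- directional derivative at θ equals η d KA
  have hA : Aform P wt st θ (θ' - θ) = η * d * KA := by
    have hdecomp : Aform P wt st θ (θ' - θ)
        = ∑ i, ∑ s', ∑ p, ∑ b, (θ' - θ) i s' p b
            * Aform P wt st θ (basis P i s' p b) := by
      calc Aform P wt st θ (θ' - θ) = AformL P wt st θ (θ' - θ) := rfl
        _ = AformL P wt st θ
            (∑ i, ∑ s', ∑ p, ∑ b, (θ' - θ) i s' p b • basis P i s' p b) := by
            rw [← param_decomp (θ' - θ)]
        _ = ∑ i, ∑ s', ∑ p, ∑ b, (θ' - θ) i s' p b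
            * Aform P wt st θ (basis P i s' p b) := by
            rw [map_sum]
            refine Finset.sum_congr rfl fun i _ => ?_
            rw [map_sum]
            refine Finset.sum_congr rfl fun s' _ => ?_
            rw [map_sum]
            refine Finset.sum_congr rfl fun p _ => ?_
            rw [map_sum]
            refine Finset.sum_congr rfl fun b _ => ?_
            rw [map_smul, smul_eq_mul, AformL_apply]
    rw [hdecomp]
    have hst : ∀ i : Fin N, ∑ s', ∑ p, ∑ b, (θ' - θ) i s' p b
        * Aform P wt st θ (basis P i s' p b)
        = ∑ p, ∑ b, (θ' - θ) i st p b * Aform P wt st θ (basis P i st p b) := by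
      intro i
      rw [Finset.sum_eq_single st]
      · intro s' _ hs'
        refine Finset.sum_eq_zero fun p _ => Finset.sum_eq_zero fun b _ => ?_
        rw [Aform_zero_of_dir wt st θ (basis P i s' p b)
          (fun j p' b' => basis_entry_zero j st p' b' (Ne.symm hs')), mul_zero]
      · intro h
        exact absurd (Finset.mem_univ st) h
    rw [Finset.sum_congr rfl fun i _ => hst i]
    have : ∀ i : Fin N, ∑ p, ∑ b, (θ' - θ) i st p b * Aform P wt st θ (basis P i st p b)
        = η * d * ∑ p, ∑ b, (afun i p b) ^ 2 := by
      intro i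
      rw [Finset.mul_sum]
      refine Finset.sum_congr rfl fun p _ => ?_
      rw [Finset.mul_sum]
      refine Finset.sum_congr rfl fun b _ => ?_
      rw [hδc i p b]
      have : Aform P wt st θ (basis P i st p b) = afun i p b := rfl
      rw [this]
      ring
    rw [Finset.sum_congr rfl fun i _ => this i, hKAdef, Finset.mul_sum]
  -- the per-agent sup bounds
  set M : Fin N → ℝ := fun i => η * d * Real.sqrt (∑ p, ∑ b, (afun i p b) ^ 2) with hMdef
  have hKi0 : ∀ i, (0:ℝ) ≤ ∑ p, ∑ b, (afun i p b) ^ 2 := fun i =>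
    Finset.sum_nonneg fun p _ => Finset.sum_nonneg fun b _ => sq_nonneg _
  have hM : ∀ (i : Fin N) (p : ParAct A P i) (b : A i), |(θ' - θ) i st p b| ≤ M i := by
    intro i p b
    rw [hδc i p b, abs_mul, abs_mul, abs_of_nonneg hη.le, abs_of_nonneg hd0]
    have hMi : M i = η * d * Real.sqrt (∑ p', ∑ b', (afun i p' b') ^ 2) := rfl
    rw [hMi, mul_assoc η d]
    refine mul_le_mul_of_nonneg_left (mul_le_mul_of_nonneg_left ?_ hd0) hη.le
    have h1 : (afun i p b) ^ 2 ≤ ∑ p', ∑ b', (afun i p' b') ^ 2 := by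
      calc (afun i p b) ^ 2 ≤ ∑ b', (afun i p b') ^ 2 := by
            refine Finset.single_le_sum (f := fun b' => (afun i p b') ^ 2)
              (fun b' _ => sq_nonneg _) (Finset.mem_univ b)
        _ ≤ ∑ p', ∑ b', (afun i p' b') ^ 2 := by
            refine Finset.single_le_sum (f := fun p' => ∑ b', (afun i p' b') ^ 2)
              (fun p' _ => Finset.sum_nonneg fun b' _ => sq_nonneg _) (Finset.mem_univ p)
    calc |afun i p b| = Real.sqrt ((afun i p b) ^ 2) := (Real.sqrt_sq_eq_abs _).symm
      _ ≤ Real.sqrt (∑ p', ∑ b', (afun i p' b') ^ 2) := Real.sqrt_le_sqrt h1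
  have hMsq : ∑ i, (M i) ^ 2 = η ^ 2 * d ^ 2 * KA := by
    rw [hKAdef, Finset.mul_sum]
    refine Finset.sum_congr rfl fun i _ => ?_
    rw [hMdef]
    have : (η * d * Real.sqrt (∑ p, ∑ b, (afun i p b) ^ 2)) ^ 2
        = η ^ 2 * d ^ 2 * (Real.sqrt (∑ p, ∑ b, (afun i p b) ^ 2)) ^ 2 := by ring
    rw [this, Real.sq_sqrt (hKi0 i)]
  have hMsum : (∑ i, M i) ^ 2 ≤ N * ∑ i, (M i) ^ 2 := by
    have := sq_sum_le_card_mul_sum_sq (s := (Finset.univ : Finset (Fin N))) (f := M)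
    simpa using this
  -- 6 N W η d ≤ 1
  have h6 : 6 * (N:ℝ) * W * (η * d) ≤ 1 := by
    have hrel : rmax - rmin = 2 * W * (1 - γ) := by
      rw [hWdef]
      field_simp
    have hdenom : (0:ℝ) < 8 * N * (rmax - rmin) := by
      have : (0:ℝ) < rmax - rmin := by linarith
      positivity
    have hη2 : η * (8 * N * (rmax - rmin)) ≤ (1 - γ) ^ 3 := by
      have := (le_div_iff₀ hdenom).1 hηle
      linarith
    have hη3 : (η * (16 * N * W)) * (1 - γ) ≤ ((1 - γ) ^ 2) * (1 - γ) := by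
      calc (η * (16 * N * W)) * (1 - γ) = η * (8 * N * (rmax - rmin)) := by
            rw [hrel]
            ring
        _ ≤ (1 - γ) ^ 3 := hη2
        _ = ((1 - γ) ^ 2) * (1 - γ) := by ring
    have hη4 : η * (16 * N * W) ≤ (1 - γ) ^ 2 := le_of_mul_le_mul_right hη3 h1γ
    have hsq : (1 - γ) ^ 2 ≤ 1 - γ := by nlinarith
    have hη5 : η * (16 * N * W) ≤ 1 - γ := le_trans hη4 hsq
    have hd2 : d * (1 - γ) ≤ 1 := by
      rw [← le_div_iff₀ h1γ] at *
      exact hd1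
    nlinarith [mul_le_mul_of_nonneg_right hη5 hd0, mul_nonneg (mul_nonneg hη.le hd0)
      (mul_nonneg hNpos.le hW0.le)]
  -- the one-dimensional function and mean value arguments
  set δp : Param S A P := θ' - θ with hδpdef
  set φ : ℝ → ℝ := fun τ => ∑ a, wt a * bnPol P (θ + τ • δp) st a with hφdef
  set φ' : ℝ → ℝ := fun τ => Aform P wt st (θ + τ • δp) δp with hφ'def
  have hdφ : ∀ τ : ℝ, HasDerivAt φ (φ' τ) τ := fun τ => hasDerivAt_Fw θ δp wt st τ
  have hdφ' : ∀ τ : ℝ, HasDerivAt φ' (Bform P wt st (θ + τ • δp) δp) τ := fun τ =>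
    hasDerivAt_Aform θ δp wt st τ
  have h0θ : θ + (0:ℝ) • δp = θ := by rw [zero_smul, add_zero]
  have hφ'0 : φ' 0 = η * d * KA := by
    rw [hφ'def]
    simp only [h0θ]
    exact hA
  have hBb : ∀ ψ : Param S A P, |Bform P wt st ψ δp|
      ≤ W * (4 * (∑ i, M i) ^ 2 + 2 * ∑ i, (M i) ^ 2) :=
    fun ψ => abs_Bform_le hDAG wt st ψ δp hwt M hM
  have hLle : W * (4 * (∑ i, M i) ^ 2 + 2 * ∑ i, (M i) ^ 2)
      ≤ 6 * N * W * (η ^ 2 * d ^ 2 * KA) := by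
    have h2N : (2:ℝ) ≤ 2 * N := by
      have : (1:ℝ) ≤ N := by exact_mod_cast hN
      linarith
    have hsum2 : (0:ℝ) ≤ ∑ i, (M i) ^ 2 := Finset.sum_nonneg fun i _ => sq_nonneg _
    have : 4 * (∑ i, M i) ^ 2 + 2 * ∑ i, (M i) ^ 2 ≤ 6 * N * ∑ i, (M i) ^ 2 := by
      nlinarith [hMsum]
    calc W * (4 * (∑ i, M i) ^ 2 + 2 * ∑ i, (M i) ^ 2)
        ≤ W * (6 * N * ∑ i, (M i) ^ 2) := mul_le_mul_of_nonneg_left this hW0.le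
      _ = 6 * N * W * (η ^ 2 * d ^ 2 * KA) := by rw [hMsq]; ring
  obtain ⟨ξ, hξ, hs1⟩ := exists_hasDerivAt_eq_slope φ φ' (by norm_num : (0:ℝ) < 1)
    (fun x _ => (hdφ x).continuousAt.continuousWithinAt) (fun x _ => hdφ x)
  obtain ⟨ζ, hζ, hs2⟩ := exists_hasDerivAt_eq_slope φ' (fun τ => Bform P wt st (θ + τ • δp) δp)
    hξ.1 (fun x _ => (hdφ' x).continuousAt.continuousWithinAt) (fun x _ => hdφ' x)
  have hφdiff : φ 1 - φ 0 = φ' ξ := by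
    rw [hs1]
    norm_num
  have hφ'diff : φ' ξ - φ' 0 = Bform P wt st (θ + ζ • δp) δp * ξ := by
    rw [hs2, sub_zero, div_mul_cancel₀ _ hξ.1.ne']
  have hBζ := hBb (θ + ζ • δp)
  have hξ01 : 0 < ξ ∧ ξ < 1 := ⟨hξ.1, hξ.2⟩
  have hmain : φ 0 ≤ φ 1 := by
    have habs : |Bform P wt st (θ + ζ • δp) δp * ξ|
        ≤ 6 * N * W * (η ^ 2 * d ^ 2 * KA) := by
      rw [abs_mul, abs_of_nonneg hξ01.1.le]
      calc |Bform P wt st (θ + ζ • δp) δp| * ξ ≤ |Bform P wt st (θ + ζ • δp) δp| * 1 :=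
            mul_le_mul_of_nonneg_left hξ01.2.le (abs_nonneg _)
        _ = |Bform P wt st (θ + ζ • δp) δp| := mul_one _
        _ ≤ _ := le_trans hBζ hLle
    have hlow : φ 1 - φ 0 ≥ η * d * KA - 6 * N * W * (η ^ 2 * d ^ 2 * KA) := by
      rw [hφdiff]
      have : φ' ξ = φ' 0 + Bform P wt st (θ + ζ • δp) δp * ξ := by linarith [hφ'diff]
      rw [this, hφ'0]
      have := neg_abs_le (Bform P wt st (θ + ζ • δp) δp * ξ)
      linarith [habs]
    have hfinal : (0:ℝ) ≤ η * d * KA - 6 * N * W * (η ^ 2 * d ^ 2 * KA) := by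
      have hX0 : 0 ≤ η * d * KA := mul_nonneg (mul_nonneg hη.le hd0) hKA0
      have ht : 0 ≤ 1 - 6 * N * W * (η * d) := by linarith
      have := mul_nonneg hX0 ht
      nlinarith [this]
    linarith
  -- translate back
  have hπ' := bnPol_isPol hDAG θ'
  have hbridge : ∀ (π0 : Pol S A), IsPol π0 →
      ∑ a, π0 st a * w a = c + ∑ a, wt a * π0 st a := by
    intro π0 hπ0
    have : ∀ a : JointAct A, π0 st a * w a = wt a * π0 st a + c * π0 st a := by
      intro a
      simp only [hwtdef]
      ring
    rw [Finset.sum_congr rfl fun a _ => this a, Finset.sum_add_distrib, ← Finset.mul_sum,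
      hπ0.2 st]
    ring
  have hφ0 : φ 0 = ∑ a, wt a * bnPol P θ st a := by
    rw [hφdef]
    simp only [h0θ]
  have h1θ : θ + (1:ℝ) • δp = θ' := by
    rw [one_smul, hδpdef]
    abel
  have hφ1 : φ 1 = ∑ a, wt a * bnPol P θ' st a := by
    rw [hφdef]
    simp only [h1θ]
  have hVSst : VS γ Ptr r (bnPol P θ) st = ∑ a, bnPol P θ st a * w a :=
    Bellman_VS hγ0 hγ1 hPtr hπ hrC hC st
  rw [hVSst, hbridge (bnPol P θ) hπ, hbridge (bnPol P θ') hπ']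
  rw [← hφ0, ← hφ1]
  linarith

end Main

/-- Monotone improvement of `V` and `Q` under one round of BN policy gradient
ascent with a small enough stepsize (Lemma A.5). -/
theorem monotone_improvement
    (P : Fin N → Finset (Fin N)) (hDAG : IsDAG P)
    (γ : ℝ) (hγ0 : 0 ≤ γ) (hγ1 : γ < 1)
    (Ptr : S → JointAct A → S → ℝ) (hPtr : IsKernel Ptr)
    (r : S → JointAct A → ℝ) (rmin rmax : ℝ)
    (hr : ∀ s a, rmin ≤ r s a ∧ r s a ≤ rmax)
    (μ : S → ℝ) (hμ : IsDist μ)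
    (η : ℝ) (hη : 0 < η) (hηle : η ≤ (1 - γ) ^ 3 / (8 * N * (rmax - rmin)))
    (θ θ' : Param S A P) (hup : θ' = θ + η • gradV γ Ptr r μ P θ) :
    (∀ s : S, VS γ Ptr r (bnPol P θ) s ≤ VS γ Ptr r (bnPol P θ') s) ∧
    (∀ (s : S) (a : JointAct A), Qa γ Ptr r (bnPol P θ) s a ≤ Qa γ Ptr r (bnPol P θ') s a) := by
  have h1γ : (0:ℝ) < 1 - γ := by linarith
  have hpos : (0:ℝ) < 8 * N * (rmax - rmin) := by
    by_contra hnp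
    push_neg at hnp
    have hnum : (0:ℝ) ≤ (1 - γ) ^ 3 := by positivity
    have : (1 - γ) ^ 3 / (8 * N * (rmax - rmin)) ≤ 0 :=
      div_nonpos_iff.mpr (Or.inl ⟨hnum, hnp⟩)
    linarith
  have hNr : (0:ℝ) < (N:ℝ) := by
    rcases Nat.eq_zero_or_pos N with h | h
    · subst h
      norm_num at hpos
    · exact_mod_cast h
  have hN1 : 1 ≤ N := by
    rcases Nat.eq_zero_or_pos N with h | h
    · subst h
      norm_num at hpos
    · exact h
  have hrr : rmin < rmax := by nlinarith [hpos, hNr]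
  set C := max |rmin| |rmax| with hCdef
  have hC : 0 ≤ C := le_trans (abs_nonneg rmin) (le_max_left _ _)
  have hrC : ∀ s a, |r s a| ≤ C := by
    intro s a
    rw [abs_le]
    constructor
    · have h1 := (hr s a).1
      have h2 : -C ≤ rmin := by
        have h3 := neg_abs_le rmin
        have h4 := le_max_left |rmin| |rmax|
        have h5 : -C ≤ -|rmin| := by
          simp only [hCdef]
          exact neg_le_neg h4
        linarith
      linarith
    · exact le_trans (hr s a).2 (le_trans (le_abs_self rmax) (le_max_right _ _))
  have hkey : ∀ st, VS γ Ptr r (bnPol P θ) st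
      ≤ ∑ a, bnPol P θ' st a * Qa γ Ptr r (bnPol P θ) st a :=
    fun st => key_improve hDAG hγ0 hγ1 hPtr hr hrr hrC hC hμ hη hηle hN1 θ θ' hup st
  have hVmono := VS_mono_of_improve hγ0 hγ1 hPtr (bnPol_isPol hDAG θ) (bnPol_isPol hDAG θ')
    hrC hC hkey
  refine ⟨hVmono, ?_⟩
  intro s a
  unfold Qa
  have hs : ∑ s', Ptr s a s' * VS γ Ptr r (bnPol P θ) s'
      ≤ ∑ s', Ptr s a s' * VS γ Ptr r (bnPol P θ') s' :=
    Finset.sum_le_sum fun s' _ => mul_le_mul_of_nonneg_left (hVmono s') (hPtr.1 s a s')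
  have hmul := mul_le_mul_of_nonneg_left hs hγ0
  linarith

end BNPG
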